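/- arXiv:2102.08568 — 5 statements merged into one kernel-verified Lean document; each statement's English description precedes it below -/
import Mathlib

section
/- For every positive integer g in a free commutative monoid setting specialized to ℕ: for any function f : ℕ → ℂ with f(1) = 0, and any set S of primes, the sum over divisors d of n (n ≥ 2) of μ(d)·1_{D(S)}(d)·f(p_min(d)) equals −Q_S(n)·f(P⁺(n)), where p_min(d) is the smallest prime factor of d, P⁺(n) is the largest prime factor of n, D(S) = {d ≥ 2 : p_min(d) ∈ S} ∪ {1}, and Q_S(n) = 1 if P⁺(n) ∈ S and 0 otherwise. -/
open scoped Classical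
open Finset

/-- The largest prime factor of `n` (0 for `n = 0, 1`). -/
noncomputable def maxPrimeFac (n : ℕ) : ℕ := n.primeFactors.sup id

lemma sq_mu_prod_primes : ∀ (t : Finset ℕ), (∀ p ∈ t, p.Prime) →
    Squarefree (∏ p ∈ t, p) ∧
      ArithmeticFunction.moebius (∏ p ∈ t, p) = (-1) ^ t.card := by
  intro t
  induction t using Finset.induction_on with
  | empty => simp
  | @insert a s ha ih =>
    intro hprime
    have hap : a.Prime := hprime a (Finset.mem_insert_self a s)
    have hsp : ∀ p ∈ s, p.Prime := fun p hp => hprime p (Finset.mem_insert_of_mem hp)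
    have hcop : Nat.Coprime a (∏ p ∈ s, p) := by
      apply Nat.Coprime.prod_right
      intro q hq
      exact (Nat.coprime_primes hap (hsp q hq)).mpr (by rintro rfl; exact ha hq)
    obtain ⟨hsq, hmu⟩ := ih hsp
    rw [Finset.prod_insert ha]
    constructor
    · exact (Nat.squarefree_mul hcop).mpr ⟨hap.squarefree, hsq⟩
    · rw [ArithmeticFunction.isMultiplicative_moebius.map_mul_of_coprime hcop,
        ArithmeticFunction.moebius_apply_prime hap, hmu,
        Finset.card_insert_of_notMem ha, pow_succ]
      ring

lemma minFac_prod_primes (t : Finset ℕ) (ht : ∀ p ∈ t, p.Prime) (hne : t.Nonempty) :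
    (∏ p ∈ t, p).minFac = t.min' hne := by
  have hmem := t.min'_mem hne
  have hdvd : t.min' hne ∣ ∏ p ∈ t, p := Finset.dvd_prod_of_mem _ hmem
  have h1 : (∏ p ∈ t, p) ≠ 1 := by
    intro h
    exact (ht _ hmem).one_lt.ne' (Nat.dvd_one.mp (h ▸ hdvd))
  have hpf : (∏ p ∈ t, p).minFac.Prime := Nat.minFac_prime h1
  obtain ⟨q, hq, hdq⟩ :=
    (hpf.prime.dvd_finset_prod_iff _).mp (Nat.minFac_dvd _)
  have heq : (∏ p ∈ t, p).minFac = q :=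
    (Nat.prime_dvd_prime_iff_eq hpf (ht q hq)).mp hdq
  exact le_antisymm (Nat.minFac_le_of_dvd (ht _ hmem).two_le hdvd)
    (heq ▸ t.min'_le q hq)

lemma duality_core (g : ℕ → ℂ) (hg : g 1 = 0) (n : ℕ) (hn : 2 ≤ n) :
    ∑ d ∈ n.divisors, (ArithmeticFunction.moebius d : ℂ) * g d.minFac
      = -(g (maxPrimeFac n)) := by
  have hn0 : n ≠ 0 := by omega
  have hne : n.primeFactors.Nonempty := Nat.nonempty_primeFactors.mpr (by omega)
  set p := maxPrimeFac n with hpdef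
  have hpmax : p = n.primeFactors.max' hne := by
    rw [hpdef, maxPrimeFac, Finset.max'_eq_sup', Finset.sup'_eq_sup]
  have hpmem : p ∈ n.primeFactors := hpmax ▸ n.primeFactors.max'_mem hne
  have hpp : p.Prime := Nat.prime_of_mem_primeFactors hpmem
  have hple : ∀ q ∈ n.primeFactors, q ≤ p := by
    intro q hq; rw [hpdef, maxPrimeFac]; exact Finset.le_sup (f := id) hq
  -- restrict to squarefree divisors
  rw [← Finset.sum_filter_of_ne (p := fun d => Squarefree d)
    (fun d _ h => by
      by_contra hsq
      rw [ArithmeticFunction.moebius_eq_zero_of_not_squarefree hsq] at h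
      simp at h)]
  -- reindex over subsets of primeFactors
  have step2 : ∑ d ∈ n.divisors.filter Squarefree,
      (ArithmeticFunction.moebius d : ℂ) * g d.minFac
      = ∑ t ∈ n.primeFactors.powerset,
        (ArithmeticFunction.moebius (∏ q ∈ t, q) : ℂ) * g ((∏ q ∈ t, q).minFac) := by
    refine Finset.sum_nbij' (fun d => d.primeFactors) (fun t => ∏ q ∈ t, q)
      ?_ ?_ ?_ ?_ ?_
    · intro d hd
      rw [Finset.mem_filter, Nat.mem_divisors] at hd
      exact Finset.mem_powerset.mpr (Nat.primeFactors_mono hd.1.1 hn0)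
    · intro t ht
      rw [Finset.mem_powerset] at ht
      refine Finset.mem_filter.mpr ⟨Nat.mem_divisors.mpr ⟨?_, hn0⟩, ?_⟩
      · exact dvd_trans (Finset.prod_dvd_prod_of_subset _ _ _ ht)
          (Nat.prod_primeFactors_dvd n)
      · exact (sq_mu_prod_primes t
          (fun q hq => Nat.prime_of_mem_primeFactors (ht hq))).1
    · intro d hd
      rw [Finset.mem_filter] at hd
      exact Nat.prod_primeFactors_of_squarefree hd.2
    · intro t ht
      rw [Finset.mem_powerset] at ht
      exact Nat.primeFactors_prod (fun q hq => Nat.prime_of_mem_primeFactors (ht hq))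
    · intro d hd
      rw [Finset.mem_filter] at hd
      rw [Nat.prod_primeFactors_of_squarefree hd.2]
  rw [step2]
  have herase : n.primeFactors = insert p (n.primeFactors.erase p) :=
    (Finset.insert_erase hpmem).symm
  rw [herase, Finset.sum_powerset_insert (Finset.notMem_erase p _),
    ← Finset.sum_add_distrib]
  rw [Finset.sum_eq_single_of_mem ∅ (Finset.empty_mem_powerset _)]
  · have h1 : (insert p (∅ : Finset ℕ)) = {p} := rfl
    rw [h1]
    simp only [Finset.prod_empty, Finset.prod_singleton,
      ArithmeticFunction.moebius_apply_one, Nat.minFac_one,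
      ArithmeticFunction.moebius_apply_prime hpp, hpp.minFac_eq, hg]
    push_cast
    ring
  · intro t ht htne
    rw [Finset.mem_powerset] at ht
    have htsub : t ⊆ n.primeFactors := ht.trans (Finset.erase_subset _ _)
    have htp : ∀ q ∈ t, q.Prime := fun q hq => Nat.prime_of_mem_primeFactors (htsub hq)
    have hpt : p ∉ t := fun h => Finset.notMem_erase p _ (ht h)
    have hlt : ∀ q ∈ t, q < p := fun q hq =>
      lt_of_le_of_ne (hple q (htsub hq)) (fun h => hpt (h ▸ hq))
    have hnet : t.Nonempty := Finset.nonempty_of_ne_empty htne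
    have htp' : ∀ q ∈ insert p t, q.Prime := by
      intro q hq
      rcases Finset.mem_insert.mp hq with rfl | hq
      · exact hpp
      · exact htp q hq
    have hmin : (∏ q ∈ insert p t, q).minFac = (∏ q ∈ t, q).minFac := by
      rw [minFac_prod_primes t htp hnet,
        minFac_prod_primes _ htp' (Finset.insert_nonempty _ _),
        Finset.min'_insert]
      exact min_eq_right (le_of_lt (hlt _ (t.min'_mem hnet)))
    have hmu1 := (sq_mu_prod_primes t htp).2
    have hmu2 := (sq_mu_prod_primes _ htp').2
    rw [Finset.card_insert_of_notMem hpt, pow_succ] at hmu2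
    rw [hmin, hmu1, hmu2]
    push_cast
    ring

/-- Alladi's duality identity over ℕ: for `n ≥ 2`, any `f` with `f 1 = 0` and any set `S`
of primes, the divisor sum of `μ(d)·1_{D(S)}(d)·f(p_min d)` equals `−Q_S(n)·f(P⁺(n))`. -/
theorem alladi_duality_nat (f : ℕ → ℂ) (hf : f 1 = 0) (S : Set ℕ)
    (hS : ∀ p ∈ S, Nat.Prime p) :
    ∀ n : ℕ, 2 ≤ n →
      ∑ d ∈ n.divisors,
        (ArithmeticFunction.moebius d : ℂ) *
          (if d = 1 ∨ d.minFac ∈ S then 1 else 0) * f d.minFac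
      = -((if maxPrimeFac n ∈ S then (1 : ℂ) else 0) * f (maxPrimeFac n)) := by
  intro n hn
  set g : ℕ → ℂ := fun x => (if x = 1 ∨ x ∈ S then 1 else 0) * f x with hgdef
  have hg1 : g 1 = 0 := by simp [hgdef, hf]
  have hn0 : n ≠ 0 := by omega
  have hne : n.primeFactors.Nonempty := Nat.nonempty_primeFactors.mpr (by omega)
  have hpmem : maxPrimeFac n ∈ n.primeFactors := by
    have : maxPrimeFac n = n.primeFactors.max' hne := by
      rw [maxPrimeFac, Finset.max'_eq_sup', Finset.sup'_eq_sup]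
    exact this ▸ n.primeFactors.max'_mem hne
  have hpp : (maxPrimeFac n).Prime := Nat.prime_of_mem_primeFactors hpmem
  have key := duality_core g hg1 n hn
  have lhs_eq : ∑ d ∈ n.divisors,
      (ArithmeticFunction.moebius d : ℂ) *
        (if d = 1 ∨ d.minFac ∈ S then 1 else 0) * f d.minFac
      = ∑ d ∈ n.divisors, (ArithmeticFunction.moebius d : ℂ) * g d.minFac := by
    refine Finset.sum_congr rfl fun d hd => ?_
    have hd0 : d ≠ 0 := Nat.pos_of_mem_divisors hd |>.ne'
    have hiff : (d = 1 ∨ d.minFac ∈ S) ↔ (d.minFac = 1 ∨ d.minFac ∈ S) := by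
      constructor
      · rintro (rfl | h)
        · exact Or.inl Nat.minFac_one
        · exact Or.inr h
      · rintro (h | h)
        · left
          by_contra hd1
          exact (Nat.minFac_prime hd1).one_lt.ne' h
        · exact Or.inr h
    rw [hgdef]
    simp only [mul_assoc]
    congr 1
    rw [if_congr hiff rfl rfl]
  rw [lhs_eq, key]
  have : g (maxPrimeFac n) = (if maxPrimeFac n ∈ S then (1 : ℂ) else 0) * f (maxPrimeFac n) := by
    rw [hgdef]
    simp only [or_iff_right_iff_imp]
    congr 1
    exact if_congr (or_iff_right hpp.one_lt.ne') rfl rfl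
  rw [this]
end

section
/- For all integers n, m ≥ 0 and any free abelian arithmetical semigroup G over a countable prime set with degree map ∂ into ℤ_{≥0} satisfying G^#(k) = c_G q^k + O(q^{ηk}) with c_G > 0, q > 1, 0 ≤ η < 1, the sum R(n, m) = ∑_{0 ≤ ∂(g) ≤ n, d_−(g) > m} μ(g)/q^{∂(g)} is bounded: R(n, m) = O(1) uniformly in n and m. -/
open scoped Classical
open Finset Filter Finsupp

/-- The degree of an element of the free abelian monoid on `P` (modelled as `P →₀ ℕ`),
induced by a degree map `deg` on the primes. -/
noncomputable def degG {P : Type*} (deg : P → ℕ) (g : P →₀ ℕ) : ℕ :=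
  g.sum fun p k => k * deg p

/-- The generalized Möbius function on the free abelian monoid on `P`:
`(−1)^r` if `g` is a sum of `r` distinct primes, and `0` otherwise. -/
noncomputable def muG {P : Type*} (g : P →₀ ℕ) : ℤ :=
  if ∀ p, g p ≤ 1 then (-1 : ℤ) ^ g.support.card else 0

/-- The minimum degree `d₋(g)` among the prime summands of `g`, with value `⊤ = ∞`
at the identity element. -/
noncomputable def dminG {P : Type*} (deg : P → ℕ) (g : P →₀ ℕ) : ℕ∞ :=
  g.support.inf fun p => (deg p : ℕ∞)

section Helpers
variable {P : Type*} (deg : P → ℕ)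

lemma degG_add (g h : P →₀ ℕ) : degG deg (g + h) = degG deg g + degG deg h :=
  Finsupp.sum_add_index' (fun a => zero_mul _) (fun a b c => add_mul b c _)

lemma dminG_lt_iff (m : ℕ) (g : P →₀ ℕ) :
    (m : ℕ∞) < dminG deg g ↔ ∀ p ∈ g.support, m < deg p := by
  rw [dminG, Finset.lt_inf_iff (by exact_mod_cast WithTop.coe_lt_top m)]
  exact forall₂_congr fun p _ => by exact_mod_cast Iff.rfl

noncomputable def indic (S : Finset P) : P →₀ ℕ :=
  ⟨S, fun p => if p ∈ S then 1 else 0, by intro p; simp⟩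

lemma indic_apply (S : Finset P) (p : P) : indic S p = if p ∈ S then 1 else 0 := rfl
lemma indic_support (S : Finset P) : (indic S).support = S := rfl

lemma innerSumIdent (m : ℕ) (f : P →₀ ℕ) :
    (∑ p ∈ Finset.HasAntidiagonal.antidiagonal f,
      (if (m : ℕ∞) < dminG deg p.1 then muG p.1 else 0)) =
    (if ∀ a ∈ f.support, deg a ≤ m then 1 else 0) := by
  classical
  set Bf := f.support.filter (fun p => m < deg p) with hBf
  have key : (∑ p ∈ Finset.HasAntidiagonal.antidiagonal f,
      (if (m : ℕ∞) < dminG deg p.1 then muG p.1 else 0)) =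
      ∑ S ∈ Bf.powerset, (-1 : ℤ) ^ S.card := by
    rw [← Finset.sum_filter_of_ne (p := fun pr => (∀ a, pr.1 a ≤ 1) ∧ (m : ℕ∞) < dminG deg pr.1)
      (by
        intro pr _ hne
        by_cases hlt : (m : ℕ∞) < dminG deg pr.1
        · refine ⟨?_, hlt⟩
          by_contra hsq
          simp [muG, hsq] at hne
        · simp [hlt] at hne)]
    refine Finset.sum_nbij' (fun pr => pr.1.support)
      (fun S => (indic S, f - indic S)) ?_ ?_ ?_ ?_ ?_
    · intro pr hpr
      simp only [Finset.mem_filter, Finset.HasAntidiagonal.mem_antidiagonal] at hpr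
      obtain ⟨hsum, hsq, hlt⟩ := hpr
      rw [Finset.mem_powerset]
      intro p hp
      rw [Finset.mem_filter]
      have hple : pr.1 p ≤ f p := by
        rw [← hsum]; exact le_add_right (le_refl _)
      have hne : pr.1 p ≠ 0 := Finsupp.mem_support_iff.mp hp
      constructor
      · rw [Finsupp.mem_support_iff]; omega
      · exact (dminG_lt_iff deg m pr.1).mp hlt p hp
    · intro S hS
      rw [Finset.mem_powerset] at hS
      have hle : indic S ≤ f := by
        intro p
        rw [indic_apply]
        split
        · next hp =>
          have : p ∈ f.support := (Finset.mem_filter.mp (hS hp)).1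
          rw [Finsupp.mem_support_iff] at this
          omega
        · exact Nat.zero_le _
      refine Finset.mem_filter.mpr ⟨Finset.HasAntidiagonal.mem_antidiagonal.mpr ?_, ?_, ?_⟩
      · exact add_tsub_cancel_of_le hle
      · intro a; rw [indic_apply]; split <;> omega
      · rw [dminG_lt_iff, indic_support]
        exact fun p hp => (Finset.mem_filter.mp (hS hp)).2
    · intro pr hpr
      simp only [Finset.mem_filter, Finset.HasAntidiagonal.mem_antidiagonal] at hpr
      obtain ⟨hsum, hsq, _⟩ := hpr
      have h1 : indic pr.1.support = pr.1 := by
        ext p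
        rw [indic_apply]
        split
        · next hp => have := Finsupp.mem_support_iff.mp hp; have := hsq p; omega
        · next hp => simp only [Finsupp.notMem_support_iff] at hp; omega
      have h2 : f - indic pr.1.support = pr.2 := by
        rw [h1, ← hsum, add_comm]; exact add_tsub_cancel_right _ _
      exact Prod.ext h1 h2
    · intro S _; exact indic_support S
    · intro pr hpr
      simp only [Finset.mem_filter, Finset.HasAntidiagonal.mem_antidiagonal] at hpr
      obtain ⟨_, hsq, hlt⟩ := hpr
      rw [if_pos hlt, muG, if_pos hsq]
  rw [key, Finset.sum_powerset_neg_one_pow_card]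
  congr 1
  rw [eq_iff_iff, hBf, Finset.filter_eq_empty_iff]
  exact ⟨fun h p hp => not_lt.mp (h hp), fun h p hp => not_lt.mpr (h p hp)⟩

end Helpers

section Ident
variable {P : Type*} (deg : P → ℕ)

lemma mainIdent (hfinle : ∀ n : ℕ, {g : P →₀ ℕ | degG deg g ≤ n}.Finite) (n m : ℕ) :
    ∑ g ∈ (hfinle n).toFinset,
      (if (m : ℕ∞) < dminG deg g then
        (muG g) * (((hfinle (n - degG deg g)).toFinset.card : ℤ)) else 0)
    = (((hfinle n).toFinset.filter (fun f => ∀ a ∈ f.support, deg a ≤ m)).card : ℤ) := by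
  classical
  have hmem : ∀ k (g : P →₀ ℕ), g ∈ (hfinle k).toFinset ↔ degG deg g ≤ k := by
    intro k g; rw [Set.Finite.mem_toFinset]; rfl
  have hrhs : (((hfinle n).toFinset.filter (fun f => ∀ a ∈ f.support, deg a ≤ m)).card : ℤ)
      = ∑ f ∈ (hfinle n).toFinset,
          ∑ p ∈ Finset.HasAntidiagonal.antidiagonal f, (if (m : ℕ∞) < dminG deg p.1 then muG p.1 else 0) := by
    rw [Finset.card_filter]
    push_cast
    refine Finset.sum_congr rfl fun f _ => ?_
    rw [innerSumIdent deg m f]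
  have hlhs : ∑ g ∈ (hfinle n).toFinset,
      (if (m : ℕ∞) < dminG deg g then
        (muG g) * (((hfinle (n - degG deg g)).toFinset.card : ℤ)) else 0)
      = ∑ g ∈ (hfinle n).toFinset, ∑ _h ∈ (hfinle (n - degG deg g)).toFinset,
          (if (m : ℕ∞) < dminG deg g then muG g else 0) := by
    refine Finset.sum_congr rfl fun g _ => ?_
    rw [Finset.sum_const, nsmul_eq_mul, mul_comm]
    split <;> simp
  rw [hrhs, hlhs, Finset.sum_sigma', Finset.sum_sigma']
  refine Finset.sum_nbij'
    (i := fun (x : Σ _ : P →₀ ℕ, P →₀ ℕ) =>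
      (⟨x.1 + x.2, (x.1, x.2)⟩ : Σ _ : P →₀ ℕ, (P →₀ ℕ) × (P →₀ ℕ)))
    (j := fun (x : Σ _ : P →₀ ℕ, (P →₀ ℕ) × (P →₀ ℕ)) =>
      (⟨x.2.1, x.2.2⟩ : Σ _ : P →₀ ℕ, P →₀ ℕ))
    ?_ ?_ ?_ ?_ ?_
  · rintro ⟨g, h⟩ hx
    rw [Finset.mem_sigma, hmem, hmem] at hx
    rw [Finset.mem_sigma, hmem, Finset.HasAntidiagonal.mem_antidiagonal]
    refine ⟨?_, rfl⟩
    rw [degG_add]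
    omega
  · rintro ⟨f, g, h⟩ hx
    simp only [Finset.mem_sigma, hmem, Finset.HasAntidiagonal.mem_antidiagonal] at hx
    obtain ⟨h1, h2⟩ := hx
    have hd : degG deg g + degG deg h = degG deg f := by rw [← degG_add, h2]
    simp only [Finset.mem_sigma, hmem]
    omega
  · rintro ⟨g, h⟩ _; rfl
  · rintro ⟨f, g, h⟩ hx
    simp only [Finset.mem_sigma, hmem, Finset.HasAntidiagonal.mem_antidiagonal] at hx
    obtain ⟨-, h2⟩ := hx
    have h2' : g + h = f := h2
    subst h2'; rfl
  · rintro ⟨g, h⟩ _; rfl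

end Ident

lemma muG_abs_le_one {P : Type*} (g : P →₀ ℕ) : |(muG g : ℝ)| ≤ 1 := by
  unfold muG
  split
  · push_cast
    rw [abs_pow, abs_neg, abs_one, one_pow]
  · norm_num


set_option maxHeartbeats 1000000 in
/-- Lemma 2.6: for an additive arithmetical semigroup satisfying Axiom A#, the partial sums
`R(n,m) = ∑_{∂(g) ≤ n, d₋(g) > m} μ(g)/q^{∂(g)}` are bounded uniformly in `n` and `m`. -/
theorem Rnm_bounded {P : Type*} [Countable P] (deg : P → ℕ) (hdeg : ∀ p, 0 < deg p)
    (cG q η : ℝ) (hc : 0 < cG) (hq : 1 < q) (hη0 : 0 ≤ η) (hη1 : η < 1)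
    (hfin : ∀ n : ℕ, {g : P →₀ ℕ | degG deg g = n}.Finite)
    (hfinle : ∀ n : ℕ, {g : P →₀ ℕ | degG deg g ≤ n}.Finite)
    (hax : ∃ C : ℝ, ∀ n : ℕ,
      |(Nat.card {g : P →₀ ℕ // degG deg g = n} : ℝ) - cG * q ^ n| ≤ C * q ^ (η * n)) :
    ∃ C : ℝ, ∀ n m : ℕ,
      |∑ g ∈ (hfinle n).toFinset,
          (if (m : ℕ∞) < dminG deg g then (muG g : ℝ) / q ^ degG deg g else 0)| ≤ C := by
    classical
  obtain ⟨Cax, hax⟩ := hax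
  have hq0 : (0:ℝ) < q := lt_trans one_pos hq
  have hq1 : q - 1 > 0 := by linarith
  have hmem : ∀ (k : ℕ) (g : P →₀ ℕ), g ∈ (hfinle k).toFinset ↔ degG deg g ≤ k := by
    intro k g; rw [Set.Finite.mem_toFinset]; rfl
  -- the counting function by exact degree
  set T : ℕ → ℝ := fun k => ((hfin k).toFinset.card : ℝ) with hTdef
  have hT0 : ∀ k, 0 ≤ T k := fun k => Nat.cast_nonneg _
  have hTax : ∀ k : ℕ, |T k - cG * q ^ k| ≤ Cax * q ^ (η * k) := by
    intro k
    have h0 : Nat.card {g : P →₀ ℕ // degG deg g = k} = (hfin k).toFinset.card :=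
      calc Nat.card {g : P →₀ ℕ // degG deg g = k}
          = Set.ncard {g : P →₀ ℕ | degG deg g = k} := Nat.card_coe_set_eq _
        _ = (hfin k).toFinset.card := Set.ncard_eq_toFinset_card _ (hfin k)
    have h1 : (Nat.card {g : P →₀ ℕ // degG deg g = k} : ℝ) = T k := by
      show (Nat.card {g : P →₀ ℕ // degG deg g = k} : ℝ) = ((hfin k).toFinset.card : ℝ)
      exact_mod_cast h0
    rw [← h1]; exact hax k
  have hCax : 0 ≤ Cax := by
    have h := hTax 0
    simp only [Nat.cast_zero, mul_zero, Real.rpow_zero, mul_one, pow_zero] at h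
    exact le_trans (abs_nonneg _) h
  -- the auxiliary base Q = q^((1+η)/2) and ratio r = q/Q
  have ha0 : (0:ℝ) < (1+η)/2 := by linarith
  have ha1 : (1+η)/2 < 1 := by linarith
  set Q : ℝ := q ^ ((1+η)/2 : ℝ) with hQdef
  have hQ1 : 1 < Q := by
    rw [hQdef]
    rw [Real.one_lt_rpow_iff_of_pos hq0]
    exact Or.inl ⟨hq, ha0⟩
  have hQ0 : (0:ℝ) < Q := lt_trans one_pos hQ1
  have hQltq : Q < q := by
    have h := (Real.rpow_lt_rpow_left_iff hq).mpr ha1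
    rwa [Real.rpow_one] at h
  set r : ℝ := q / Q with hrdef
  have hr1 : 1 < r := (one_lt_div hQ0).mpr hQltq
  have hr0 : (0:ℝ) < r := lt_trans one_pos hr1
  have hQr : Q * r = q := by
    rw [hrdef]; field_simp
  have hrpow : ∀ k : ℕ, q ^ (η * k) ≤ Q ^ k := by
    intro k
    have h1 : Q ^ k = q ^ (((1+η)/2) * (k:ℝ)) := by
      rw [hQdef, Real.rpow_mul hq0.le, Real.rpow_natCast]
    rw [h1, Real.rpow_le_rpow_left_iff hq]
    have hk : (0:ℝ) ≤ (k:ℝ) := Nat.cast_nonneg k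
    nlinarith
  have hT' : ∀ k, |T k - cG * q ^ k| ≤ Cax * Q ^ k := fun k =>
    (hTax k).trans (mul_le_mul_of_nonneg_left (hrpow k) hCax)
  have hTub : ∀ k, T k ≤ (cG + Cax) * q ^ k := by
    intro k
    have h1 := (abs_le.mp (hT' k)).2
    have h2 : Q ^ k ≤ q ^ k := pow_le_pow_left₀ hQ0.le hQltq.le k
    have hq0k : (0:ℝ) < q ^ k := pow_pos hq0 k
    nlinarith
  -- geometric sum bound
  have hgeom : ∀ (x : ℝ), 1 < x → ∀ k : ℕ,
      ∑ j ∈ Finset.range (k+1), x ^ j ≤ x ^ k * (x / (x-1)) := by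
    intro x hx k
    have hx1 : (0:ℝ) < x - 1 := by linarith
    have hx0 : (0:ℝ) < x := by linarith
    rw [geom_sum_eq (by linarith : x ≠ 1), div_le_iff₀ hx1]
    have h2 : x ^ k * (x / (x-1)) * (x-1) = x ^ (k+1) := by
      field_simp
      ring
    rw [h2]
    nlinarith [pow_pos hx0 (k+1)]
  -- fiberwise decomposition of sums over the ball
  have hfiber : ∀ (n : ℕ) (φ : ℕ → ℝ),
      ∑ g ∈ (hfinle n).toFinset, φ (degG deg g)
        = ∑ j ∈ Finset.range (n+1), T j * φ j := by
    intro n φ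
    rw [← Finset.sum_fiberwise_of_maps_to (t := Finset.range (n+1))
      (g := fun g => degG deg g)
      (fun g hg => by simp only [Finset.mem_range]; have := (hmem n g).mp hg; omega)
      (fun g => φ (degG deg g))]
    refine Finset.sum_congr rfl fun j hj => ?_
    rw [Finset.mem_range] at hj
    have hset : (hfinle n).toFinset.filter (fun g => degG deg g = j)
        = (hfin j).toFinset := by
      ext g
      simp only [Finset.mem_filter, hmem, Set.Finite.mem_toFinset, Set.mem_setOf_eq]
      exact ⟨fun h => h.2, fun h => ⟨by omega, h⟩⟩
    rw [hset]
    have hconst : ∀ g ∈ (hfin j).toFinset, φ (degG deg g) = φ j := by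
      intro g hg
      rw [Set.Finite.mem_toFinset] at hg
      rw [hg]
    rw [Finset.sum_congr rfl hconst, Finset.sum_const, nsmul_eq_mul, hTdef]
  have hN : ∀ k : ℕ, ((hfinle k).toFinset.card : ℝ) = ∑ j ∈ Finset.range (k+1), T j := by
    intro k
    calc ((hfinle k).toFinset.card : ℝ) = ∑ _g ∈ (hfinle k).toFinset, (1:ℝ) := by
          rw [Finset.sum_const, nsmul_eq_mul, mul_one]
      _ = ∑ j ∈ Finset.range (k+1), T j * 1 := hfiber k (fun _ => (1:ℝ))
      _ = ∑ j ∈ Finset.range (k+1), T j := by simp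
  have hcCax : (0:ℝ) ≤ cG + Cax := by linarith
  have hNub : ∀ k : ℕ, ((hfinle k).toFinset.card : ℝ) ≤ (cG + Cax) * (q/(q-1)) * q ^ k := by
    intro k
    rw [hN]
    calc ∑ j ∈ Finset.range (k+1), T j
        ≤ ∑ j ∈ Finset.range (k+1), (cG + Cax) * q ^ j :=
          Finset.sum_le_sum fun j _ => hTub j
      _ = (cG + Cax) * ∑ j ∈ Finset.range (k+1), q ^ j := by rw [Finset.mul_sum]
      _ ≤ (cG + Cax) * (q ^ k * (q/(q-1))) :=
          mul_le_mul_of_nonneg_left (hgeom q hq k) hcCax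
      _ = (cG + Cax) * (q/(q-1)) * q ^ k := by ring
  -- the main term constant and error bound for N
  have hC3 : (0:ℝ) ≤ Cax * (Q/(Q-1)) + cG/(q-1) := by
    have h1 : (0:ℝ) < Q - 1 := by linarith
    have : (0:ℝ) ≤ Cax * (Q/(Q-1)) := mul_nonneg hCax (by positivity)
    have : (0:ℝ) ≤ cG/(q-1) := by positivity
    linarith
  have hE : ∀ k : ℕ,
      |((hfinle k).toFinset.card : ℝ) - (cG*q/(q-1)) * q ^ k|
        ≤ (Cax * (Q/(Q-1)) + cG/(q-1)) * Q ^ k := by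
    intro k
    have hQ1' : (0:ℝ) < Q - 1 := by linarith
    have hgs : ∑ j ∈ Finset.range (k+1), q ^ j = (q^(k+1) - 1)/(q-1) :=
      geom_sum_eq (by linarith : q ≠ 1) (k+1)
    have h1 : ((hfinle k).toFinset.card : ℝ) - (cG*q/(q-1)) * q ^ k
        = (∑ j ∈ Finset.range (k+1), (T j - cG * q ^ j)) - cG/(q-1) := by
      rw [hN, Finset.sum_sub_distrib, ← Finset.mul_sum, hgs]
      field_simp
      ring
    rw [h1]
    have h2 : |(∑ j ∈ Finset.range (k+1), (T j - cG * q ^ j)) - cG/(q-1)|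
        ≤ (∑ j ∈ Finset.range (k+1), |T j - cG * q ^ j|) + cG/(q-1) := by
      refine (abs_sub _ _).trans ?_
      gcongr
      · exact Finset.abs_sum_le_sum_abs _ _
      · rw [abs_of_nonneg (by positivity)]
    refine h2.trans ?_
    have h3 : ∑ j ∈ Finset.range (k+1), |T j - cG * q ^ j|
        ≤ Cax * (Q ^ k * (Q/(Q-1))) := by
      calc ∑ j ∈ Finset.range (k+1), |T j - cG * q ^ j|
          ≤ ∑ j ∈ Finset.range (k+1), Cax * Q ^ j :=
            Finset.sum_le_sum fun j _ => hT' j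
        _ = Cax * ∑ j ∈ Finset.range (k+1), Q ^ j := by rw [Finset.mul_sum]
        _ ≤ Cax * (Q ^ k * (Q/(Q-1))) :=
            mul_le_mul_of_nonneg_left (hgeom Q hQ1 k) hCax
    have h4 : cG/(q-1) ≤ cG/(q-1) * Q ^ k :=
      le_mul_of_one_le_right (by positivity) (one_le_pow₀ hQ1.le)
    have h5 : Cax * (Q ^ k * (Q/(Q-1))) = Cax * (Q/(Q-1)) * Q ^ k := by ring
    rw [h5] at h3
    linarith [h3, h4, mul_add ((Q:ℝ)^k) 1 1]
  -- now the uniform bound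
  refine ⟨((cG + Cax) * (q/(q-1)) + (cG + Cax) * (Cax * (Q/(Q-1)) + cG/(q-1)) * (r/(r-1)))
    / (cG*q/(q-1)), ?_⟩
  intro n m
  have hD0 : (0:ℝ) < cG*q/(q-1) := by positivity
  have hqn0 : (0:ℝ) < q ^ n := pow_pos hq0 n
  -- cast the combinatorial identity to ℝ
  have hid := mainIdent deg hfinle n m
  have hidR : ∑ g ∈ (hfinle n).toFinset,
      (if (m : ℕ∞) < dminG deg g then
        (muG g : ℝ) * ((hfinle (n - degG deg g)).toFinset.card : ℝ) else 0)
      = (((hfinle n).toFinset.filter (fun f => ∀ a ∈ f.support, deg a ≤ m)).card : ℝ) := by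
    exact_mod_cast hid
  -- split the left side into main term and error term
  have hsplit : ∑ g ∈ (hfinle n).toFinset,
      (if (m : ℕ∞) < dminG deg g then
        (muG g : ℝ) * ((hfinle (n - degG deg g)).toFinset.card : ℝ) else 0)
      = (cG*q/(q-1)) * q ^ n *
          (∑ g ∈ (hfinle n).toFinset,
            (if (m : ℕ∞) < dminG deg g then (muG g : ℝ) / q ^ degG deg g else 0))
        + ∑ g ∈ (hfinle n).toFinset,
            (if (m : ℕ∞) < dminG deg g then
              (muG g : ℝ) * (((hfinle (n - degG deg g)).toFinset.card : ℝ)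
                - (cG*q/(q-1)) * q ^ (n - degG deg g)) else 0) := by
    rw [Finset.mul_sum, ← Finset.sum_add_distrib]
    refine Finset.sum_congr rfl fun g hg => ?_
    have hgle : degG deg g ≤ n := (hmem n g).mp hg
    have hpow : q ^ (n - degG deg g) * q ^ (degG deg g) = q ^ n := by
      rw [← pow_add, Nat.sub_add_cancel hgle]
    have hgpow : (0:ℝ) < q ^ degG deg g := pow_pos hq0 _
    have hpow' : q ^ (n - degG deg g) = q ^ n / q ^ (degG deg g) := by
      rw [eq_div_iff hgpow.ne']; exact hpow
    split
    · rw [hpow']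
      field_simp
      ring
    · simp
  -- bound the error sum
  have hErr : |∑ g ∈ (hfinle n).toFinset,
      (if (m : ℕ∞) < dminG deg g then
        (muG g : ℝ) * (((hfinle (n - degG deg g)).toFinset.card : ℝ)
          - (cG*q/(q-1)) * q ^ (n - degG deg g)) else 0)|
      ≤ (cG + Cax) * (Cax * (Q/(Q-1)) + cG/(q-1)) * (r/(r-1)) * q ^ n := by
    set C3 : ℝ := Cax * (Q/(Q-1)) + cG/(q-1) with hC3def
    have step1 : |∑ g ∈ (hfinle n).toFinset,
        (if (m : ℕ∞) < dminG deg g then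
          (muG g : ℝ) * (((hfinle (n - degG deg g)).toFinset.card : ℝ)
            - (cG*q/(q-1)) * q ^ (n - degG deg g)) else 0)|
        ≤ ∑ g ∈ (hfinle n).toFinset,
            |(((hfinle (n - degG deg g)).toFinset.card : ℝ)
              - (cG*q/(q-1)) * q ^ (n - degG deg g))| := by
      refine (Finset.abs_sum_le_sum_abs _ _).trans (Finset.sum_le_sum fun g _ => ?_)
      split
      · rw [abs_mul]
        exact mul_le_of_le_one_left (abs_nonneg _) (muG_abs_le_one g)
      · rw [abs_zero]
        exact abs_nonneg _
    have step2 : ∑ g ∈ (hfinle n).toFinset,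
        |(((hfinle (n - degG deg g)).toFinset.card : ℝ)
          - (cG*q/(q-1)) * q ^ (n - degG deg g))|
        = ∑ j ∈ Finset.range (n+1), T j *
            |(((hfinle (n - j)).toFinset.card : ℝ) - (cG*q/(q-1)) * q ^ (n - j))| :=
      hfiber n (fun j => |(((hfinle (n - j)).toFinset.card : ℝ)
          - (cG*q/(q-1)) * q ^ (n - j))|)
    have step3 : ∑ j ∈ Finset.range (n+1), T j *
          |(((hfinle (n - j)).toFinset.card : ℝ) - (cG*q/(q-1)) * q ^ (n - j))|
        ≤ ∑ j ∈ Finset.range (n+1), ((cG + Cax) * C3) * (Q ^ n * r ^ j) := by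
      refine Finset.sum_le_sum fun j hj => ?_
      rw [Finset.mem_range] at hj
      have hjn : j ≤ n := by omega
      have hqQ : q ^ j * Q ^ (n - j) = Q ^ n * r ^ j := by
        have e1 : q ^ j = Q ^ j * r ^ j := by rw [← mul_pow, hQr]
        have e2 : Q ^ j * Q ^ (n - j) = Q ^ n := by
          rw [← pow_add, Nat.add_sub_cancel' hjn]
        calc q ^ j * Q ^ (n - j) = (Q ^ j * Q ^ (n - j)) * r ^ j := by rw [e1]; ring
          _ = Q ^ n * r ^ j := by rw [e2]
      calc T j * |(((hfinle (n - j)).toFinset.card : ℝ) - (cG*q/(q-1)) * q ^ (n - j))|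
          ≤ ((cG + Cax) * q ^ j) * (C3 * Q ^ (n - j)) :=
            mul_le_mul (hTub j) (hE (n - j)) (abs_nonneg _)
              (mul_nonneg hcCax (pow_pos hq0 j).le)
        _ = ((cG + Cax) * C3) * (q ^ j * Q ^ (n - j)) := by ring
        _ = ((cG + Cax) * C3) * (Q ^ n * r ^ j) := by rw [hqQ]
    have step4 : ∑ j ∈ Finset.range (n+1), ((cG + Cax) * C3) * (Q ^ n * r ^ j)
        ≤ (cG + Cax) * C3 * (r/(r-1)) * q ^ n := by
      have hc30 : (0:ℝ) ≤ (cG + Cax) * C3 := mul_nonneg hcCax hC3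
      calc ∑ j ∈ Finset.range (n+1), ((cG + Cax) * C3) * (Q ^ n * r ^ j)
          = ((cG + Cax) * C3 * Q ^ n) * ∑ j ∈ Finset.range (n+1), r ^ j := by
            rw [Finset.mul_sum]; refine Finset.sum_congr rfl fun j _ => by ring
        _ ≤ ((cG + Cax) * C3 * Q ^ n) * (r ^ n * (r/(r-1))) := by
            refine mul_le_mul_of_nonneg_left (hgeom r hr1 n) ?_
            exact mul_nonneg hc30 (pow_pos hQ0 n).le
        _ = (cG + Cax) * C3 * (r/(r-1)) * (Q ^ n * r ^ n) := by ring
        _ = (cG + Cax) * C3 * (r/(r-1)) * q ^ n := by rw [← mul_pow, hQr]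
    calc |∑ g ∈ (hfinle n).toFinset,
        (if (m : ℕ∞) < dminG deg g then
          (muG g : ℝ) * (((hfinle (n - degG deg g)).toFinset.card : ℝ)
            - (cG*q/(q-1)) * q ^ (n - degG deg g)) else 0)|
        ≤ ∑ g ∈ (hfinle n).toFinset,
            |(((hfinle (n - degG deg g)).toFinset.card : ℝ)
              - (cG*q/(q-1)) * q ^ (n - degG deg g))| := step1
      _ = _ := step2
      _ ≤ _ := step3
      _ ≤ (cG + Cax) * C3 * (r/(r-1)) * q ^ n := step4
  -- the smooth count is nonnegative and at most the full count
  have hSm0 : (0:ℝ) ≤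
      (((hfinle n).toFinset.filter (fun f => ∀ a ∈ f.support, deg a ≤ m)).card : ℝ) :=
    Nat.cast_nonneg _
  have hSmub : (((hfinle n).toFinset.filter (fun f => ∀ a ∈ f.support, deg a ≤ m)).card : ℝ)
      ≤ (cG + Cax) * (q/(q-1)) * q ^ n := by
    refine le_trans ?_ (hNub n)
    exact_mod_cast Finset.card_filter_le _ _
  -- put everything together
  set S : ℝ := ∑ g ∈ (hfinle n).toFinset,
      (if (m : ℕ∞) < dminG deg g then (muG g : ℝ) / q ^ degG deg g else 0) with hSdef
  have hmain : (cG*q/(q-1)) * q ^ n * S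
      = (((hfinle n).toFinset.filter (fun f => ∀ a ∈ f.support, deg a ≤ m)).card : ℝ)
        - ∑ g ∈ (hfinle n).toFinset,
            (if (m : ℕ∞) < dminG deg g then
              (muG g : ℝ) * (((hfinle (n - degG deg g)).toFinset.card : ℝ)
                - (cG*q/(q-1)) * q ^ (n - degG deg g)) else 0) := by
    rw [← hidR, hsplit, hSdef]
    ring
  have hbound : (cG*q/(q-1)) * q ^ n * |S|
      ≤ ((cG + Cax) * (q/(q-1))
          + (cG + Cax) * (Cax * (Q/(Q-1)) + cG/(q-1)) * (r/(r-1))) * q ^ n := by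
    have h1 : |(cG*q/(q-1)) * q ^ n * S| = (cG*q/(q-1)) * q ^ n * |S| := by
      rw [abs_mul, abs_of_pos (mul_pos hD0 hqn0)]
    rw [← h1, hmain]
    refine (abs_sub _ _).trans ?_
    rw [abs_of_nonneg hSm0]
    have := hErr
    linarith [hSmub]
  have hfinal : |S| ≤ ((cG + Cax) * (q/(q-1))
      + (cG + Cax) * (Cax * (Q/(Q-1)) + cG/(q-1)) * (r/(r-1))) / (cG*q/(q-1)) := by
    rw [le_div_iff₀ hD0]
    nlinarith [hqn0, abs_nonneg S, hbound]
  exact hfinal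
end

section
/- Let G be an additive arithmetical semigroup (freely generated over countable primes with degree map ∂ into ℤ_{≥0}). For any function f : ℕ ∪ {∞} → ℂ with f(0) = 0, any S ⊆ P, and any g ∈ G, we have ∑_{h | g} μ(h)·1_{D(G,S)}(h)·f(d_−(h)) = −Q_S(g)·f(d⁺(g)). -/
open scoped Classical
open Finset Filter Finsupp

/-- The minimal degree among prime summands of `g`, with the convention `d₋(0) = 0`. -/
noncomputable def dmin0 {P : Type*} (deg : P → ℕ) (g : P →₀ ℕ) : ℕ :=
  if h : g.support.Nonempty then g.support.inf' h deg else 0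

noncomputable def dmaxG {P : Type*} (deg : P → ℕ) (g : P →₀ ℕ) : ℕ :=
  g.support.sup deg

noncomputable def QS {P : Type*} (deg : P → ℕ) (S : Set P) (g : P →₀ ℕ) : ℕ :=
  (g.support.filter fun p => p ∈ S ∧ deg p = dmaxG deg g).card

/-- `g` lies in the distinguished set `D(G,S)`: either `g` is the identity, or `g` has a
unique prime factor of minimal degree and that prime belongs to `S`. -/
def inDistinguished {P : Type*} (deg : P → ℕ) (S : Set P) (g : P →₀ ℕ) : Prop :=
  g = 0 ∨ ∃ p ∈ g.support, deg p = dmin0 deg g ∧ p ∈ S ∧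
    ∀ p' ∈ g.support, deg p' = dmin0 deg g → p' = p

section Aux

variable {P : Type*}

/-- Squarefree indicator finsupp of a finset. -/
noncomputable def indF (T : Finset P) : P →₀ ℕ :=
  ⟨T, fun p => if p ∈ T then 1 else 0, fun p => by by_cases h : p ∈ T <;> simp [h]⟩

lemma indF_apply (T : Finset P) (p : P) : indF T p = if p ∈ T then 1 else 0 := rfl

lemma indF_support (T : Finset P) : (indF T).support = T := rfl

lemma indF_sqf (T : Finset P) (p : P) : indF T p ≤ 1 := by
  rw [indF_apply]; split <;> simp

lemma indF_support_eq {h : P →₀ ℕ} (hh : ∀ p, h p ≤ 1) : indF h.support = h := by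
  ext p
  rw [indF_apply]
  by_cases hp : p ∈ h.support
  · rw [if_pos hp]
    have h1 := Finsupp.mem_support_iff.mp hp
    have h2 := hh p
    omega
  · rw [if_neg hp]
    exact (Finsupp.notMem_support_iff.mp hp).symm

lemma muG_indF (T : Finset P) : muG (indF T) = (-1 : ℤ) ^ T.card := by
  unfold muG
  rw [if_pos (indF_sqf T)]
  rfl

/-- The minimal degree on a finset, with convention `0` for the empty set. -/
noncomputable def dTf (deg : P → ℕ) (T : Finset P) : ℕ :=
  if h : T.Nonempty then T.inf' h deg else 0

lemma dmin0_indF (deg : P → ℕ) (T : Finset P) : dmin0 deg (indF T) = dTf deg T := rfl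

/-- Distinguished finsets: there is a unique element of minimal degree and it lies in `S`. -/
def DistT (deg : P → ℕ) (S : Set P) (T : Finset P) : Prop :=
  ∃ p ∈ T, deg p = dTf deg T ∧ p ∈ S ∧ ∀ q ∈ T, deg q = dTf deg T → q = p

lemma inDistinguished_indF (deg : P → ℕ) (S : Set P) (T : Finset P) :
    inDistinguished deg S (indF T) ↔ (T = ∅ ∨ DistT deg S T) := by
  unfold inDistinguished DistT
  rw [show (indF T).support = T from rfl, dmin0_indF]
  constructor
  · rintro (h | h)
    · exact Or.inl ((indF_support T).symm.trans (by rw [h, Finsupp.support_zero]))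
    · exact Or.inr h
  · rintro (h | h)
    · left; subst h; ext p; simp [indF_apply]
    · exact Or.inr h

lemma dTf_le (deg : P → ℕ) {T : Finset P} {q : P} (hq : q ∈ T) : dTf deg T ≤ deg q := by
  rw [dTf, dif_pos ⟨q, hq⟩]
  exact Finset.inf'_le _ hq

lemma dTf_insert (deg : P → ℕ) {p : P} {T' : Finset P} (h : ∀ q ∈ T', deg p ≤ deg q) :
    dTf deg (insert p T') = deg p := by
  rw [dTf, dif_pos ⟨p, Finset.mem_insert_self p T'⟩]
  apply le_antisymm
  · exact Finset.inf'_le _ (Finset.mem_insert_self p T')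
  · apply Finset.le_inf'
    intro q hq
    rcases Finset.mem_insert.mp hq with rfl | hq
    · exact le_rfl
    · exact h q hq

lemma distT_insert (deg : P → ℕ) (S : Set P) {p : P} {T' : Finset P}
    (hpS : p ∈ S) (h : ∀ q ∈ T', deg p < deg q) : DistT deg S (insert p T') := by
  have hd : dTf deg (insert p T') = deg p := dTf_insert deg fun q hq => (h q hq).le
  refine ⟨p, Finset.mem_insert_self p T', hd.symm, hpS, fun q hq hdq => ?_⟩
  rcases Finset.mem_insert.mp hq with rfl | hq
  · rfl
  · exact absurd (hdq.trans hd) (h q hq).ne'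

lemma sum_pow_neg_one (x : Finset P) :
    ∑ T ∈ x.powerset, (-1 : ℂ) ^ T.card = if x = ∅ then 1 else 0 := by
  have h := Finset.sum_powerset_neg_one_pow_card (x := x)
  have : ∑ T ∈ x.powerset, (-1 : ℂ) ^ T.card
      = ((∑ T ∈ x.powerset, (-1 : ℤ) ^ T.card : ℤ) : ℂ) := by
    push_cast
    rfl
  rw [this, h]
  split <;> simp

end Aux

/-- Lemma 2.2 (Alladi duality for Axiom A# semigroups): for any `f` with `f 0 = 0`,
any `S` and any `g`, `∑_{h | g} μ(h)·1_{D(G,S)}(h)·f(d₋(h)) = −Q_S(g)·f(d⁺(g))`. -/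
theorem alladi_duality_semigroup {P : Type*} [Countable P]
    (deg : P → ℕ) (hdeg : ∀ p, 0 < deg p) (S : Set P)
    (f : ℕ → ℂ) (hf : f 0 = 0) (g : P →₀ ℕ) :
    ∑ h ∈ Finset.Iic g,
        (muG h : ℂ) * (if inDistinguished deg S h then 1 else 0) * f (dmin0 deg h)
      = -((QS deg S g : ℂ) * f (dmaxG deg g)) := by
  classical
  set s := g.support with hs
  -- Step 1: restrict to squarefree divisors and reindex by subsets of the support.
  have step1 : ∑ h ∈ Finset.Iic g,
        (muG h : ℂ) * (if inDistinguished deg S h then 1 else 0) * f (dmin0 deg h)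
      = ∑ T ∈ s.powerset,
        (muG (indF T) : ℂ) * (if inDistinguished deg S (indF T) then 1 else 0)
          * f (dmin0 deg (indF T)) := by
    rw [← Finset.sum_filter_of_ne (p := fun h => ∀ p, h p ≤ 1)
      (fun h _ hne => by
        by_contra hsq
        apply hne
        rw [muG, if_neg hsq]
        simp)]
    refine Finset.sum_bij' (i := fun h _ => h.support) (j := fun T _ => indF T)
      ?_ ?_ ?_ ?_ ?_
    · intro h hh
      rw [Finset.mem_powerset]
      intro p hp
      have hle : h ≤ g := Finset.mem_Iic.mp (Finset.mem_filter.mp hh).1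
      have h1 : h p ≠ 0 := Finsupp.mem_support_iff.mp hp
      have h2 : h p ≤ g p := hle p
      exact Finsupp.mem_support_iff.mpr (by omega)
    · intro T hT
      rw [Finset.mem_filter]
      refine ⟨Finset.mem_Iic.mpr fun p => ?_, indF_sqf T⟩
      rw [indF_apply]
      split
      · rename_i hp
        have : g p ≠ 0 := Finsupp.mem_support_iff.mp (Finset.mem_powerset.mp hT ‹p ∈ T›)
        omega
      · exact Nat.zero_le _
    · intro h hh
      exact indF_support_eq (Finset.mem_filter.mp hh).2
    · intro T _
      exact indF_support T
    · intro h hh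
      rw [indF_support_eq (Finset.mem_filter.mp hh).2]
  rw [step1]
  -- Step 1b: explicit form of the summand.
  have step1b : ∑ T ∈ s.powerset,
        (muG (indF T) : ℂ) * (if inDistinguished deg S (indF T) then 1 else 0)
          * f (dmin0 deg (indF T))
      = ∑ T ∈ s.powerset,
        (-1 : ℂ) ^ T.card * (if T = ∅ ∨ DistT deg S T then 1 else 0) * f (dTf deg T) := by
    refine Finset.sum_congr rfl fun T _ => ?_
    rw [muG_indF, dmin0_indF]
    push_cast
    congr 1
    rw [if_congr (inDistinguished_indF deg S T) rfl rfl]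
  rw [step1b]
  -- Step 2: keep only distinguished nonempty subsets.
  have step2 : ∑ T ∈ s.powerset,
        (-1 : ℂ) ^ T.card * (if T = ∅ ∨ DistT deg S T then 1 else 0) * f (dTf deg T)
      = ∑ T ∈ s.powerset.filter (DistT deg S), (-1 : ℂ) ^ T.card * f (dTf deg T) := by
    rw [← Finset.sum_filter_of_ne (p := DistT deg S) (fun T _ hne => by
      by_contra hD
      apply hne
      by_cases hE : T = ∅
      · subst hE
        rw [dTf, dif_neg (by simp), hf]
        ring
      · rw [if_neg (by tauto)]
        ring)]
    refine Finset.sum_congr rfl fun T hT => ?_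
    rw [if_pos (Or.inr (Finset.mem_filter.mp hT).2)]
    ring
  rw [step2]
  -- Step 3: reindex distinguished subsets by (minimal prime, rest).
  have step3 : ∑ T ∈ s.powerset.filter (DistT deg S), (-1 : ℂ) ^ T.card * f (dTf deg T)
      = ∑ x ∈ (s.filter (· ∈ S)).sigma
          (fun p => (s.filter fun q => deg p < deg q).powerset),
          (-1 : ℂ) ^ (x.2.card + 1) * f (deg x.1) := by
    refine Finset.sum_bij'
      (i := fun T hT => ⟨((Finset.mem_filter.mp hT).2).choose,
        T.erase ((Finset.mem_filter.mp hT).2).choose⟩)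
      (j := fun x _ => insert x.1 x.2) ?_ ?_ ?_ ?_ ?_
    · -- maps into the sigma set
      intro T hT
      have hTs := (Finset.mem_filter.mp hT).1
      have hD := (Finset.mem_filter.mp hT).2
      show (⟨hD.choose, T.erase hD.choose⟩ : Σ _ : P, Finset P) ∈
        (s.filter (· ∈ S)).sigma (fun p => (s.filter fun q => deg p < deg q).powerset)
      obtain ⟨hm, hdm, hmS, huniq⟩ := hD.choose_spec
      rw [Finset.mem_sigma]
      constructor
      · exact Finset.mem_filter.mpr ⟨Finset.mem_powerset.mp hTs hm, hmS⟩
      · rw [Finset.mem_powerset]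
        intro q hq
        obtain ⟨hqm, hqT⟩ := Finset.mem_erase.mp hq
        refine Finset.mem_filter.mpr ⟨Finset.mem_powerset.mp hTs hqT, ?_⟩
        have h1 : dTf deg T ≤ deg q := dTf_le deg hqT
        have h2 : deg q ≠ dTf deg T := fun h => hqm (huniq q hqT h)
        show deg hD.choose < deg q
        omega
    · -- inverse maps into the filtered powerset
      intro x hx
      obtain ⟨hx1, hx2⟩ := Finset.mem_sigma.mp hx
      obtain ⟨hx1s, hx1S⟩ := Finset.mem_filter.mp hx1
      have hsub := Finset.mem_powerset.mp hx2
      refine Finset.mem_filter.mpr ⟨Finset.mem_powerset.mpr ?_, ?_⟩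
      · intro q hq
        rcases Finset.mem_insert.mp hq with rfl | hq
        · exact hx1s
        · exact (Finset.mem_filter.mp (hsub hq)).1
      · exact distT_insert deg S hx1S fun q hq => (Finset.mem_filter.mp (hsub hq)).2
    · -- left inverse
      intro T hT
      exact Finset.insert_erase ((Finset.mem_filter.mp hT).2).choose_spec.1
    · -- right inverse
      intro x hx
      obtain ⟨p, T'⟩ := x
      obtain ⟨hx1, hx2⟩ := Finset.mem_sigma.mp hx
      obtain ⟨hx1s, hx1S⟩ := Finset.mem_filter.mp hx1
      have hsub := Finset.mem_powerset.mp hx2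
      have hlt : ∀ q ∈ T', deg p < deg q := fun q hq =>
        (Finset.mem_filter.mp (hsub hq)).2
      have hni : p ∉ T' := fun h => lt_irrefl _ (hlt _ h)
      have hT' : insert p T' ∈ s.powerset.filter (DistT deg S) := by
        refine Finset.mem_filter.mpr ⟨Finset.mem_powerset.mpr ?_, ?_⟩
        · intro q hq
          rcases Finset.mem_insert.mp hq with rfl | hq
          · exact hx1s
          · exact (Finset.mem_filter.mp (hsub hq)).1
        · exact distT_insert deg S hx1S hlt
      have hD := (Finset.mem_filter.mp hT').2
      show (⟨hD.choose, (insert p T').erase hD.choose⟩ : Σ _ : P, Finset P)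
        = (⟨p, T'⟩ : Σ _ : P, Finset P)
      obtain ⟨hm, hdm, hmS, huniq⟩ := hD.choose_spec
      have hdins : dTf deg (insert p T') = deg p :=
        dTf_insert deg fun q hq => (hlt q hq).le
      have hmx : hD.choose = p :=
        (huniq p (Finset.mem_insert_self _ _) hdins.symm).symm
      rw [hmx, Finset.erase_insert hni]
    · -- values agree
      intro T hT
      have hD := (Finset.mem_filter.mp hT).2
      show (-1 : ℂ) ^ T.card * f (dTf deg T)
        = (-1 : ℂ) ^ ((T.erase hD.choose).card + 1) * f (deg hD.choose)
      obtain ⟨hm, hdm, hmS, huniq⟩ := hD.choose_spec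
      rw [Finset.card_erase_add_one hm, hdm]
  rw [step3]
  -- Step 4: compute the inner sums.
  rw [Finset.sum_sigma]
  have step4 : ∀ p ∈ s.filter (· ∈ S),
      ∑ T' ∈ (s.filter fun q => deg p < deg q).powerset,
        (-1 : ℂ) ^ (T'.card + 1) * f (deg p)
      = -((if (s.filter fun q => deg p < deg q) = ∅ then 1 else 0) * f (deg p)) := by
    intro p _
    calc ∑ T' ∈ (s.filter fun q => deg p < deg q).powerset,
          (-1 : ℂ) ^ (T'.card + 1) * f (deg p)
        = (∑ T' ∈ (s.filter fun q => deg p < deg q).powerset, (-1 : ℂ) ^ T'.card)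
            * (-(f (deg p))) := by
          rw [Finset.sum_mul]
          exact Finset.sum_congr rfl fun T' _ => by ring
      _ = _ := by
          rw [sum_pow_neg_one]
          split <;> ring
  rw [Finset.sum_congr rfl step4]
  rw [Finset.sum_neg_distrib]
  congr 1
  -- Step 5: reduce to a sum over the primes of maximal degree in S.
  have step5 : ∑ p ∈ s.filter (· ∈ S),
      (if (s.filter fun q => deg p < deg q) = ∅ then 1 else 0) * f (deg p)
      = ∑ p ∈ (s.filter (· ∈ S)).filter
          (fun p => (s.filter fun q => deg p < deg q) = ∅), f (deg p) :=
    (Finset.sum_congr rfl fun p _ => by split <;> ring).trans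
      (Finset.sum_filter _ _).symm
  rw [step5, Finset.filter_filter]
  have hA : ∀ p ∈ s, ((s.filter fun q => deg p < deg q) = ∅ ↔ deg p = dmaxG deg g) := by
    intro p hp
    rw [Finset.filter_eq_empty_iff]
    constructor
    · intro h
      exact le_antisymm (Finset.le_sup hp) (Finset.sup_le fun q hq => not_lt.mp (h hq))
    · intro h q hq
      exact not_lt.mpr (h ▸ Finset.le_sup hq)
  have hfe : (s.filter fun p => p ∈ S ∧ (s.filter fun q => deg p < deg q) = ∅)
      = s.filter fun p => p ∈ S ∧ deg p = dmaxG deg g := by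
    apply Finset.filter_congr
    intro p hp
    rw [hA p hp]
  rw [hfe]
  have step6 : ∑ p ∈ s.filter (fun p => p ∈ S ∧ deg p = dmaxG deg g), f (deg p)
      = (QS deg S g : ℂ) * f (dmaxG deg g) := by
    rw [Finset.sum_congr rfl (fun p hp => by
      rw [(Finset.mem_filter.mp hp).2.2])]
    rw [Finset.sum_const, nsmul_eq_mul]
    rfl
  exact step6
end

section
/- Let f : ℝ → ℂ be any complex-valued function on ℕ with ∑_{n ≤ x} |f(n)| = O(x) and ∑_{n ≤ x} f(n) = o(x). Then ∑_{n ≤ x} (x/n − ⌊x/n⌋) f(n) = o(x). -/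
open Finset Filter

lemma axer_abel (g : ℕ → ℝ) (F : ℕ → ℂ) (a x : ℕ) (h : a < x) :
    ∑ n ∈ Ioc a x, g n • (F n - F (n - 1)) =
      g x • F x - g (a+1) • F a + ∑ n ∈ Ico (a+1) x, (g n - g (n+1)) • F n := by
  induction x, h using Nat.le_induction with
  | base =>
      simp only [Nat.Ioc_succ_singleton, Finset.sum_singleton, Nat.add_sub_cancel,
        Finset.Ico_self, Finset.sum_empty, add_zero, smul_sub]
  | succ x hx ih =>
      rw [Finset.sum_Ioc_succ_top (le_of_lt hx), ih, Finset.sum_Ico_succ_top hx]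
      simp only [Nat.add_sub_cancel, Complex.real_smul]
      push_cast
      ring

lemma axer_tele (h : ℕ → ℝ) (a b : ℕ) (hab : a ≤ b) :
    ∑ n ∈ Ico a b, (h n - h (n+1)) = h a - h b := by
  induction b, hab using Nat.le_induction with
  | base => simp
  | succ b hb ih => rw [Finset.sum_Ico_succ_top hb, ih]; ring

/-- Axer's theorem specialized to ℕ: if `∑_{n ≤ x} |f(n)| = O(x)` and
`∑_{n ≤ x} f(n) = o(x)`, then `∑_{n ≤ x} (x/n − ⌊x/n⌋) f(n) = o(x)`. -/
theorem axer_nat (f : ℕ → ℂ)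
    (hO : ∃ C : ℝ, ∀ x : ℕ, ∑ n ∈ Finset.Icc 1 x, ‖f n‖ ≤ C * x)
    (ho : Tendsto (fun x : ℕ => (∑ n ∈ Finset.Icc 1 x, f n) / (x : ℂ)) atTop (nhds 0)) :
    Tendsto (fun x : ℕ =>
        (∑ n ∈ Finset.Icc 1 x,
          (((x : ℝ) / n - (⌊(x : ℝ) / n⌋₊ : ℝ)) : ℝ) • f n) / (x : ℂ))
      atTop (nhds 0) := by
  obtain ⟨C₀, hC₀⟩ := hO
  set C : ℝ := max C₀ 0 with hCdef
  have hC0 : 0 ≤ C := le_max_right _ _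
  have hC : ∀ x : ℕ, ∑ n ∈ Finset.Icc 1 x, ‖f n‖ ≤ C * x := fun x =>
    (hC₀ x).trans (mul_le_mul_of_nonneg_right (le_max_left _ _) (Nat.cast_nonneg x))
  set F : ℕ → ℂ := fun x => ∑ n ∈ Finset.Icc 1 x, f n with hFdef
  have ho' := Metric.tendsto_atTop.mp ho
  have hFo : ∀ δ : ℝ, 0 < δ → ∃ N : ℕ, 1 ≤ N ∧ ∀ n, N ≤ n → ‖F n‖ ≤ δ * n := by
    intro δ hδ
    obtain ⟨N, hN⟩ := ho' δ hδ
    refine ⟨max N 1, le_max_right _ _, fun n hn => ?_⟩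
    have hn1 : 1 ≤ n := le_trans (le_max_right _ _) hn
    have := hN n (le_trans (le_max_left _ _) hn)
    rw [dist_zero_right] at this
    have h2 : ‖F n‖ = ‖F n / n‖ * n := by
      rw [norm_div, Complex.norm_natCast, div_mul_cancel₀]
      exact Nat.cast_ne_zero.mpr (by omega)
    rw [h2]
    exact mul_le_mul_of_nonneg_right this.le (Nat.cast_nonneg n)
  rw [Metric.tendsto_atTop]
  intro ε hε
  set K : ℕ := ⌈4 * C / ε⌉₊ + 2 with hKdef
  have hK2 : 2 ≤ K := by omega
  have hKpos : (0:ℝ) < K := by positivity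
  have hKC : C / K ≤ ε / 4 := by
    rw [div_le_iff₀ hKpos]
    have h1 : 4 * C / ε ≤ (K : ℝ) := le_trans (Nat.le_ceil _) (by rw [hKdef]; push_cast; linarith)
    rw [div_le_iff₀ hε] at h1
    nlinarith
  set δ : ℝ := ε / (4 * (K + 1)) with hδdef
  have hδ : 0 < δ := by positivity
  obtain ⟨N, hN1, hN⟩ := hFo δ hδ
  refine ⟨K * (N + 1), fun x hx => ?_⟩
  set a : ℕ := x / K with hadef
  have hKn0 : 0 < K := by omega
  have haN : N ≤ a := by
    have h1 : N + 1 ≤ x / K :=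
      (Nat.le_div_iff_mul_le hKn0).mpr (by rw [Nat.mul_comm]; exact hx)
    omega
  have ha1 : 1 ≤ a := by omega
  have hx1 : 1 ≤ x := by
    have h' : K ≤ K * (N + 1) := Nat.le_mul_of_pos_right K (by omega)
    omega
  have hax : a < x := Nat.div_lt_self (by omega) (by omega)
  have hxN : N ≤ x := by omega
  set g : ℕ → ℝ := fun n => (x : ℝ) / n - (⌊(x : ℝ) / n⌋₊ : ℝ) with hgdef
  have hdivnn : ∀ n : ℕ, 0 ≤ (x:ℝ)/n := fun n => by positivity
  have hg0 : ∀ n, 0 ≤ g n := fun n => sub_nonneg.mpr (Nat.floor_le (hdivnn n))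
  have hg1 : ∀ n, g n ≤ 1 := fun n => by
    have := Nat.lt_floor_add_one ((x:ℝ)/n)
    simp only [hgdef]; linarith
  have hgabs : ∀ n, |g n| ≤ 1 := fun n => abs_le.mpr ⟨by linarith [hg0 n], hg1 n⟩
  -- rewrite the numerator via Abel summation
  have hfF : ∀ n ∈ Ioc a x, g n • f n = g n • (F n - F (n-1)) := by
    intro n hn
    have hn1 : 1 ≤ n := by have := (Finset.mem_Ioc.mp hn).1; omega
    have hFn : F n - F (n-1) = f n := by
      obtain ⟨m, rfl⟩ : ∃ m, n = m + 1 := ⟨n - 1, by omega⟩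
      simp only [hFdef, Nat.add_sub_cancel]
      rw [Finset.sum_Icc_succ_top (by omega : 1 ≤ m + 1)]
      ring
    rw [hFn]
  have hsplit : (∑ n ∈ Finset.Icc 1 x,
        (((x : ℝ) / n - (⌊(x : ℝ) / n⌋₊ : ℝ)) : ℝ) • f n) =
      (∑ n ∈ Finset.Icc 1 a, g n • f n) +
        (g x • F x - g (a+1) • F a + ∑ n ∈ Ico (a+1) x, (g n - g (n+1)) • F n) := by
    show (∑ n ∈ Finset.Icc 1 x, g n • f n) = _
    rw [show Finset.Icc 1 x = Finset.Ioc 0 x from Finset.Icc_add_one_left_eq_Ioc 0 x,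
      ← Finset.sum_Ioc_consecutive _ (Nat.zero_le a) hax.le,
      show Finset.Ioc 0 a = Finset.Icc 1 a from (Finset.Icc_add_one_left_eq_Ioc 0 a).symm,
      Finset.sum_congr rfl hfF, axer_abel g F a x hax]
  -- bound on the first part
  have bound1 : ‖∑ n ∈ Finset.Icc 1 a, g n • f n‖ ≤ ε / 4 * x := by
    calc ‖∑ n ∈ Finset.Icc 1 a, g n • f n‖ ≤ ∑ n ∈ Finset.Icc 1 a, ‖g n • f n‖ :=
          norm_sum_le _ _
      _ ≤ ∑ n ∈ Finset.Icc 1 a, ‖f n‖ := by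
          refine Finset.sum_le_sum fun n _ => ?_
          rw [norm_smul, Real.norm_eq_abs]
          exact mul_le_of_le_one_left (norm_nonneg _) (hgabs n)
      _ ≤ C * a := hC a
      _ ≤ C * ((x:ℝ) / K) := mul_le_mul_of_nonneg_left Nat.cast_div_le hC0
      _ = C / K * x := by ring
      _ ≤ ε / 4 * x := mul_le_mul_of_nonneg_right hKC (by positivity)
  have hFb : ∀ n, N ≤ n → n ≤ x → ‖F n‖ ≤ δ * x := fun n h1 h2 =>
    (hN n h1).trans (mul_le_mul_of_nonneg_left (by exact_mod_cast h2) hδ.le)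
  have bound2 : ‖g x • F x‖ ≤ δ * x := by
    rw [norm_smul, Real.norm_eq_abs]
    exact (mul_le_of_le_one_left (norm_nonneg _) (hgabs x)).trans (hFb x hxN le_rfl)
  have bound3 : ‖g (a+1) • F a‖ ≤ δ * x := by
    rw [norm_smul, Real.norm_eq_abs]
    exact (mul_le_of_le_one_left (norm_nonneg _) (hgabs _)).trans (hFb a haN hax.le)
  -- bound on the middle sum
  set h : ℕ → ℝ := fun n => (x : ℝ) / n + (⌊(x : ℝ) / n⌋₊ : ℝ) with hhdef
  have hdivmono : ∀ n : ℕ, 1 ≤ n → (x:ℝ)/((n+1 : ℕ):ℝ) ≤ (x:ℝ)/n := by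
    intro n hn
    apply div_le_div_of_nonneg_left (Nat.cast_nonneg x)
    · exact_mod_cast hn
    · exact_mod_cast Nat.le_succ n
  have habs : ∀ n : ℕ, 1 ≤ n → |g n - g (n+1)| ≤ h n - h (n+1) := by
    intro n hn
    have h2 : ((⌊(x:ℝ)/((n+1:ℕ):ℝ)⌋₊ : ℕ) : ℝ) ≤ ((⌊(x:ℝ)/(n:ℝ)⌋₊ : ℕ) : ℝ) := by
      exact_mod_cast Nat.floor_mono (hdivmono n hn)
    have hU : 0 ≤ (x:ℝ)/n - (x:ℝ)/((n+1:ℕ):ℝ) := sub_nonneg.mpr (hdivmono n hn)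
    have hV : 0 ≤ ((⌊(x:ℝ)/(n:ℝ)⌋₊ : ℕ) : ℝ) - ((⌊(x:ℝ)/((n+1:ℕ):ℝ)⌋₊ : ℕ) : ℝ) :=
      sub_nonneg.mpr h2
    have hgd : g n - g (n+1) = ((x:ℝ)/n - (x:ℝ)/((n+1:ℕ):ℝ)) -
        (((⌊(x:ℝ)/(n:ℝ)⌋₊ : ℕ) : ℝ) - ((⌊(x:ℝ)/((n+1:ℕ):ℝ)⌋₊ : ℕ) : ℝ)) := by
      simp only [hgdef]; ring
    have hhd : h n - h (n+1) = ((x:ℝ)/n - (x:ℝ)/((n+1:ℕ):ℝ)) +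
        (((⌊(x:ℝ)/(n:ℝ)⌋₊ : ℕ) : ℝ) - ((⌊(x:ℝ)/((n+1:ℕ):ℝ)⌋₊ : ℕ) : ℝ)) := by
      simp only [hhdef]; ring
    rw [hgd, hhd]
    calc |_ - _| ≤ |(x:ℝ)/n - (x:ℝ)/((n+1:ℕ):ℝ)| +
          |((⌊(x:ℝ)/(n:ℝ)⌋₊ : ℕ) : ℝ) - ((⌊(x:ℝ)/((n+1:ℕ):ℝ)⌋₊ : ℕ) : ℝ)| := abs_sub _ _
      _ = _ := by rw [abs_of_nonneg hU, abs_of_nonneg hV]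
  have hha1 : h (a+1) ≤ 2 * K := by
    have hlt : x < K * (a + 1) := by
      have h1 := Nat.div_add_mod x K
      have h2 := Nat.mod_lt x hKn0
      have h3 : K * (a + 1) = K * (x / K) + K := by rw [hadef, Nat.mul_succ]
      omega
    have hltR : (x:ℝ) < (K:ℝ) * ((a+1:ℕ):ℝ) := by exact_mod_cast hlt
    have hdiv : (x:ℝ)/((a+1:ℕ):ℝ) < K := by
      rw [div_lt_iff₀ (by positivity)]
      linarith
    have hfl : ((⌊(x:ℝ)/((a+1:ℕ):ℝ)⌋₊ : ℕ) : ℝ) ≤ (x:ℝ)/((a+1:ℕ):ℝ) :=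
      Nat.floor_le (hdivnn _)
    simp only [hhdef]
    linarith
  have hhx : 0 ≤ h x := by
    simp only [hhdef]
    positivity
  have bound4 : ‖∑ n ∈ Ico (a+1) x, (g n - g (n+1)) • F n‖ ≤ 2 * K * (δ * x) := by
    calc ‖∑ n ∈ Ico (a+1) x, (g n - g (n+1)) • F n‖
        ≤ ∑ n ∈ Ico (a+1) x, ‖(g n - g (n+1)) • F n‖ := norm_sum_le _ _
      _ ≤ ∑ n ∈ Ico (a+1) x, (h n - h (n+1)) * (δ * x) := by
          refine Finset.sum_le_sum fun n hn => ?_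
          obtain ⟨hn1, hn2⟩ := Finset.mem_Ico.mp hn
          rw [norm_smul, Real.norm_eq_abs]
          have hna : 1 ≤ n := by omega
          refine mul_le_mul (habs n hna) (hFb n (by omega) (by omega)) (norm_nonneg _) ?_
          exact le_trans (abs_nonneg _) (habs n hna)
      _ = (h (a+1) - h x) * (δ * x) := by
          rw [← Finset.sum_mul, axer_tele h (a+1) x hax]
      _ ≤ 2 * K * (δ * x) := by
          refine mul_le_mul_of_nonneg_right ?_ (by positivity)
          linarith
  -- conclusion
  rw [dist_zero_right, hsplit, norm_div, Complex.norm_natCast,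
    div_lt_iff₀ (by exact_mod_cast hx1 : (0:ℝ) < (x:ℝ))]
  have key : δ * (2 + 2 * K) = ε / 2 := by
    rw [hδdef]
    field_simp
    ring
  have hxR : (1:ℝ) ≤ x := by exact_mod_cast hx1
  calc ‖_ + (g x • F x - g (a+1) • F a + ∑ n ∈ Ico (a+1) x, (g n - g (n+1)) • F n)‖
      ≤ ‖∑ n ∈ Finset.Icc 1 a, g n • f n‖ + (‖g x • F x‖ + ‖g (a+1) • F a‖ +
        ‖∑ n ∈ Ico (a+1) x, (g n - g (n+1)) • F n‖) := by
        refine (norm_add_le _ _).trans (add_le_add_right ?_ _)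
        exact (norm_add_le _ _).trans (add_le_add_left (norm_sub_le _ _) _)
    _ ≤ ε / 4 * x + (δ * x + δ * x + 2 * K * (δ * x)) := by
        gcongr
    _ < ε * x := by nlinarith
end

section
/- Let S be a set of primes with natural density δ(S), let P⁺(n) denote the largest prime factor of n (for n ≥ 2), and let Q_S(n) = 1 if P⁺(n) ∈ S and 0 otherwise. Then ∑_{2 ≤ n ≤ x} Q_S(n) ~ δ(S)·x as x → ∞. -/
open scoped Classical
open Finset Filter

lemma maxPrimeFac_mem {m : ℕ} (h : 2 ≤ m) : maxPrimeFac m ∈ m.primeFactors := by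
  have hne : m.primeFactors.Nonempty := (Nat.nonempty_primeFactors).2 h
  obtain ⟨b, hb, hbe⟩ := Finset.exists_mem_eq_sup m.primeFactors hne id
  rw [maxPrimeFac, hbe]; exact hb

lemma maxPrimeFac_prime {m : ℕ} (h : 2 ≤ m) : (maxPrimeFac m).Prime :=
  (Nat.mem_primeFactors.mp (maxPrimeFac_mem h)).1

lemma maxPrimeFac_dvd {m : ℕ} (h : 2 ≤ m) : maxPrimeFac m ∣ m :=
  (Nat.mem_primeFactors.mp (maxPrimeFac_mem h)).2.1

lemma le_maxPrimeFac {p m : ℕ} (hp : p.Prime) (hd : p ∣ m) (hm : m ≠ 0) : p ≤ maxPrimeFac m := by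
  have : p ∈ m.primeFactors := Nat.mem_primeFactors.mpr ⟨hp, hd, hm⟩
  exact Finset.le_sup (f := id) this

lemma maxPrimeFac_le_of_dvd {d n : ℕ} (hd : d ∣ n) (hn : n ≠ 0) :
    maxPrimeFac d ≤ maxPrimeFac n := by
  have : d.primeFactors ⊆ n.primeFactors := Nat.primeFactors_mono hd hn
  exact Finset.sup_mono this

lemma maxPrimeFac_mul_prime {m p : ℕ} (hm : m ≠ 0) (hp : p.Prime) (h : maxPrimeFac m ≤ p) :
    maxPrimeFac (m * p) = p := by
  rw [maxPrimeFac, Nat.primeFactors_mul hm hp.ne_zero, Finset.sup_union,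
    hp.primeFactors, Finset.sup_singleton]
  exact max_eq_right h

lemma maxPrimeFac_le_of_forall {m B : ℕ} (h : ∀ p ∈ m.primeFactors, p ≤ B) :
    maxPrimeFac m ≤ B := Finset.sup_le h

/-- The key combinatorial bijection: summing `w (P⁺ n)` over `2 ≤ n ≤ x` equals summing `w p`
over pairs `(m, p)` with `p` prime, `P⁺ m ≤ p`, `m * p ≤ x`. -/
lemma sum_maxPrimeFac_eq (x : ℕ) (w : ℕ → ℝ) :
    ∑ n ∈ Icc 2 x, w (maxPrimeFac n)
      = ∑ m ∈ Icc 1 x, ∑ p ∈ (Icc (max (maxPrimeFac m) 2) (x / m)).filter Nat.Prime, w p := by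
  rw [← Finset.sum_sigma (Icc 1 x)
    (fun m => (Icc (max (maxPrimeFac m) 2) (x / m)).filter Nat.Prime) (fun q => w q.2)]
  refine Finset.sum_nbij' (fun n => ⟨n / maxPrimeFac n, maxPrimeFac n⟩)
    (fun q => q.1 * q.2) ?_ ?_ ?_ ?_ ?_
  · intro n hn
    rw [Finset.mem_Icc] at hn
    have h2 : 2 ≤ n := hn.1
    have hp : (maxPrimeFac n).Prime := maxPrimeFac_prime h2
    have hd : maxPrimeFac n ∣ n := maxPrimeFac_dvd h2
    have hn0 : n ≠ 0 := by omega
    have hppos : 0 < maxPrimeFac n := hp.pos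
    have hm1 : 1 ≤ n / maxPrimeFac n := (Nat.one_le_div_iff hppos).2 (Nat.le_of_dvd (by omega) hd)
    have hmul : (n / maxPrimeFac n) * maxPrimeFac n = n := Nat.div_mul_cancel hd
    rw [Finset.mem_sigma, Finset.mem_Icc, Finset.mem_filter, Finset.mem_Icc]
    refine ⟨⟨hm1, le_trans (Nat.div_le_self _ _) hn.2⟩, ⟨⟨?_, ?_⟩, hp⟩⟩
    · exact max_le (maxPrimeFac_le_of_dvd (Nat.div_dvd_of_dvd hd) hn0) hp.two_le
    · rw [Nat.le_div_iff_mul_le (by omega : 0 < n / maxPrimeFac n)]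
      rw [mul_comm, hmul]; exact hn.2
  · rintro ⟨m, p⟩ hq
    rw [Finset.mem_sigma, Finset.mem_Icc, Finset.mem_filter, Finset.mem_Icc] at hq
    dsimp only at hq ⊢
    obtain ⟨⟨hm1, _⟩, ⟨⟨hmax, hple⟩, hp⟩⟩ := hq
    rw [Finset.mem_Icc]
    have hple' := (Nat.le_div_iff_mul_le (show 0 < m by omega)).1 hple
    have h2p := hp.two_le
    constructor
    · calc 2 ≤ p := hp.two_le
        _ ≤ m * p := Nat.le_mul_of_pos_left p hm1
    · rw [mul_comm]; exact hple'
  · intro n hn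
    rw [Finset.mem_Icc] at hn
    exact Nat.div_mul_cancel (maxPrimeFac_dvd hn.1)
  · rintro ⟨m, p⟩ hq
    rw [Finset.mem_sigma, Finset.mem_Icc, Finset.mem_filter, Finset.mem_Icc] at hq
    dsimp only at hq ⊢
    obtain ⟨⟨hm1, _⟩, ⟨⟨hmax, hple⟩, hp⟩⟩ := hq
    have hP : maxPrimeFac (m * p) = p :=
      maxPrimeFac_mul_prime (by omega) hp (le_trans (le_max_left _ _) hmax)
    simp only [hP]
    congr 1
    exact Nat.mul_div_cancel _ hp.pos
  · intro n hn; rfl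

noncomputable def Wsum (w : ℕ → ℝ) (y : ℕ) : ℝ := ∑ p ∈ (Finset.range (y+1)).filter Nat.Prime, w p

lemma window_sum (w : ℕ → ℝ) {a b : ℕ} (h2 : 2 ≤ a) (hab : a ≤ b + 1) :
    ∑ p ∈ (Icc a b).filter Nat.Prime, w p = Wsum w b - Wsum w (a - 1) := by
  have hu : range a ∪ Icc a b = range (b+1) := by
    rw [Finset.range_eq_Ico, Finset.range_eq_Ico, ← Finset.Ico_add_one_right_eq_Icc a b]
    exact Finset.Ico_union_Ico_eq_Ico (Nat.zero_le a) hab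
  have hd : Disjoint (range a) (Icc a b) := by
    rw [Finset.range_eq_Ico, ← Finset.Ico_add_one_right_eq_Icc a b]
    exact Finset.Ico_disjoint_Ico_consecutive 0 a (b+1)
  have hsplit : Wsum w b = Wsum w (a-1) + ∑ p ∈ (Icc a b).filter Nat.Prime, w p := by
    have ha1 : a - 1 + 1 = a := by omega
    rw [Wsum, Wsum, ha1, ← hu, Finset.filter_union,
      Finset.sum_union (Finset.disjoint_filter_filter hd)]
  linarith

lemma key_identity (x : ℕ) (w : ℕ → ℝ) :
    ∑ n ∈ Icc 2 x, w (maxPrimeFac n)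
      = ∑ m ∈ (Icc 1 x).filter (fun m => max (maxPrimeFac m) 2 ≤ x / m),
          (Wsum w (x / m) - Wsum w (max (maxPrimeFac m) 2 - 1)) := by
  rw [sum_maxPrimeFac_eq]
  rw [← Finset.sum_filter_add_sum_filter_not (Icc 1 x)
    (fun m => max (maxPrimeFac m) 2 ≤ x / m)]
  have h0 : ∑ m ∈ (Icc 1 x).filter (fun m => ¬ max (maxPrimeFac m) 2 ≤ x / m),
      ∑ p ∈ (Icc (max (maxPrimeFac m) 2) (x / m)).filter Nat.Prime, w p = 0 := by
    apply Finset.sum_eq_zero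
    intro m hm
    rw [Finset.mem_filter] at hm
    rw [Finset.Icc_eq_empty hm.2, Finset.filter_empty, Finset.sum_empty]
  rw [h0, add_zero]
  apply Finset.sum_congr rfl
  intro m hm
  rw [Finset.mem_filter] at hm
  exact window_sum w (le_max_right _ 2) (le_trans hm.2 (Nat.le_succ _))

lemma Wsum_indicator (S : Set ℕ) (hS : ∀ p ∈ S, Nat.Prime p) (y : ℕ) :
    Wsum (fun p => if p ∈ S then (1:ℝ) else 0) y
      = (((Finset.range (y+1)).filter (fun p => p ∈ S)).card : ℝ) := by
  rw [Wsum, Finset.sum_boole]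
  congr 2
  rw [Finset.filter_filter]
  apply Finset.filter_congr
  intro p _
  exact ⟨fun h => h.2, fun h => ⟨hS p h, h⟩⟩

lemma Wsum_one (y : ℕ) :
    Wsum (fun _ => (1:ℝ)) y = (((Finset.range (y+1)).filter Nat.Prime).card : ℝ) := by
  rw [Wsum, Finset.sum_const, nsmul_eq_mul, mul_one]

lemma prime_dyadic (k : ℕ) :
    k * ((Ico (2^k) (2^(k+1))).filter Nat.Prime).card ≤ 2^(k+2) := by
  set s := (Ico (2^k) (2^(k+1))).filter Nat.Prime with hs
  have h1 : (2^k : ℕ) ^ s.card ≤ ∏ r ∈ s, r := by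
    apply Finset.pow_card_le_prod
    intro r hr
    rw [hs, Finset.mem_filter, Finset.mem_Ico] at hr
    exact hr.1.1
  have h2 : ∏ r ∈ s, r ≤ primorial (2^(k+1) - 1) := by
    rw [primorial]
    have hr : 2^(k+1) - 1 + 1 = 2^(k+1) := by
      have : 0 < 2^(k+1) := by positivity
      omega
    rw [hr]
    rw [← Finset.filter_congr_decidable]
    apply Finset.prod_le_prod_of_subset_of_one_le'
    · intro r hr
      rw [hs, Finset.mem_filter, Finset.mem_Ico] at hr
      rw [Finset.mem_filter, Finset.mem_range]
      exact ⟨hr.1.2, hr.2⟩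
    · intro i hi _
      rw [Finset.mem_filter] at hi
      exact hi.2.one_lt.le
  have h3 : primorial (2^(k+1) - 1) ≤ 2 ^ (2^(k+2)) := by
    calc primorial (2^(k+1) - 1) ≤ 4 ^ (2^(k+1) - 1) := primorial_le_4_pow _
      _ ≤ 4 ^ (2^(k+1)) := Nat.pow_le_pow_right (by norm_num) (Nat.sub_le _ _)
      _ = 2 ^ (2^(k+2)) := by
          rw [show (4:ℕ) = 2^2 by norm_num, ← pow_mul]
          congr 1
          ring
  have h4 : (2:ℕ) ^ (k * s.card) ≤ 2 ^ (2^(k+2)) := by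
    rw [pow_mul]
    exact le_trans h1 (le_trans h2 h3)
  exact (Nat.pow_le_pow_iff_right (by norm_num)).1 h4

lemma primesBelow_card_le : ∀ k : ℕ, 1 ≤ k →
    ((((range (2^(k+1))).filter Nat.Prime).card : ℝ) ≤ 16 * 2^k / k) := by
  have step : ∀ k : ℕ, 2 ≤ k →
      (((range (2^(k+1))).filter Nat.Prime).card : ℝ) ≤ 16 * 2^k / k →
      (((range (2^(k+2))).filter Nat.Prime).card : ℝ) ≤ 16 * 2^(k+1) / (k+1) := by
    intro k hk ih
    have hsplit : ((range (2^(k+2))).filter Nat.Prime).card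
        ≤ ((range (2^(k+1))).filter Nat.Prime).card
          + ((Ico (2^(k+1)) (2^(k+2))).filter Nat.Prime).card := by
      have hu : range (2^(k+1)) ∪ Ico (2^(k+1)) (2^(k+2)) = range (2^(k+2)) := by
        rw [Finset.range_eq_Ico, Finset.range_eq_Ico]
        exact Finset.Ico_union_Ico_eq_Ico (Nat.zero_le _)
          (Nat.pow_le_pow_right (show 0 < 2 by norm_num) (by omega))
      rw [← hu, Finset.filter_union]
      exact Finset.card_union_le _ _
    have hΔ : (((Ico (2^(k+1)) (2^(k+2))).filter Nat.Prime).card : ℝ) ≤ 2^(k+3) / (k+1) := by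
      have := prime_dyadic (k+1)
      have hcast : ((k+1) : ℝ) * (((Ico (2^(k+1)) (2^(k+2))).filter Nat.Prime).card : ℝ)
          ≤ 2^(k+3) := by
        have := Nat.cast_le (α := ℝ) |>.2 this
        push_cast at this ⊢
        convert this using 2 <;> ring_nf
      rw [le_div_iff₀ (show (0:ℝ) < (k:ℝ)+1 by positivity)]
      nlinarith [hcast]
    have hcast2 : (((range (2^(k+2))).filter Nat.Prime).card : ℝ)
        ≤ (((range (2^(k+1))).filter Nat.Prime).card : ℝ)
          + (((Ico (2^(k+1)) (2^(k+2))).filter Nat.Prime).card : ℝ) := by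
      exact_mod_cast hsplit
    have hkR : (2:ℝ) ≤ (k:ℝ) := by exact_mod_cast hk
    have h2k : (0:ℝ) < 2^k := by positivity
    have hk0 : (0:ℝ) < (k:ℝ) := by linarith
    calc (((range (2^(k+2))).filter Nat.Prime).card : ℝ)
        ≤ 16 * 2^k / k + 2^(k+3) / (k+1) := by linarith
      _ ≤ 16 * 2^(k+1) / (k+1) := by
          rw [div_add_div _ _ (ne_of_gt hk0) (by positivity), div_le_div_iff₀ (by positivity) (by positivity)]
          have e1 : (2:ℝ)^(k+1) = 2 * 2^k := by ring
          have e3 : (2:ℝ)^(k+3) = 8 * 2^k := by ring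
          rw [e1, e3]
          nlinarith [mul_nonneg (mul_nonneg (le_of_lt h2k)
            (show (0:ℝ) ≤ (k:ℝ)+1 by linarith)) (show (0:ℝ) ≤ 8*(k:ℝ)-16 by linarith)]
  intro k hk
  induction k with
  | zero => omega
  | succ n ih =>
    rcases Nat.lt_or_ge n 2 with hn | hn
    · interval_cases n
      · -- k = 1 : primes < 4
        have : ((range (2^2)).filter Nat.Prime).card ≤ 4 := by
          calc ((range (2^2)).filter Nat.Prime).card ≤ (range (2^2)).card :=
              Finset.card_filter_le _ _
            _ = 4 := by norm_num
        have h4 : (((range (2^2)).filter Nat.Prime).card : ℝ) ≤ 4 := by exact_mod_cast this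
        norm_num at h4 ⊢
        linarith
      · -- k = 2 : primes < 8
        have : ((range (2^3)).filter Nat.Prime).card ≤ 8 := by
          calc ((range (2^3)).filter Nat.Prime).card ≤ (range (2^3)).card :=
              Finset.card_filter_le _ _
            _ = 8 := by norm_num
        have h8 : (((range (2^3)).filter Nat.Prime).card : ℝ) ≤ 8 := by exact_mod_cast this
        norm_num at h8 ⊢
        linarith
    · have h := step n hn (ih (by omega))
      show (((range (2^(n+2))).filter Nat.Prime).card : ℝ) ≤ 16 * 2^(n+1) / ((n+1 : ℕ) : ℝ)
      push_cast
      exact h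

lemma sum_inv_sq_le : ∀ n : ℕ, 1 ≤ n → ∑ k ∈ Icc 1 n, (1:ℝ)/(k:ℝ)^2 ≤ 2 - 1/n := by
  intro n hn
  induction n with
  | zero => omega
  | succ m ih =>
    rcases Nat.lt_or_ge m 1 with hm | hm
    · interval_cases m
      norm_num
    · have ihm := ih hm
      rw [← Finset.Ico_add_one_right_eq_Icc, Finset.sum_Ico_succ_top (by omega), Finset.Ico_add_one_right_eq_Icc]
      have hm0 : (0:ℝ) < (m:ℝ) := by exact_mod_cast hm
      have hm1 : (0:ℝ) < (m:ℝ) + 1 := by linarith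
      have key : (1:ℝ)/((m+1):ℝ)^2 ≤ 1/m - 1/(m+1) := by
        rw [div_sub_div _ _ (ne_of_gt hm0) (ne_of_gt hm1)]
        rw [div_le_div_iff₀ (by positivity) (by positivity)]
        push_cast
        nlinarith
      push_cast at ihm key ⊢
      linarith

lemma cheby_sum (N : ℕ) :
    ∑ r ∈ (range N).filter Nat.Prime,
      (((range (r+1)).filter Nat.Prime).card : ℝ) / (r:ℝ)^2 ≤ 512 := by
  have hmap : ∀ r ∈ (range N).filter Nat.Prime, Nat.log 2 r ∈ range (N+1) := by
    intro r hr
    rw [Finset.mem_filter, Finset.mem_range] at hr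
    rw [Finset.mem_range]
    have := Nat.log_le_self 2 r
    omega
  rw [← Finset.sum_fiberwise_of_maps_to hmap
    (fun r => (((range (r+1)).filter Nat.Prime).card : ℝ) / (r:ℝ)^2)]
  have hblock : ∀ k ∈ range (N+1),
      ∑ r ∈ ((range N).filter Nat.Prime).filter (fun r => Nat.log 2 r = k),
        (((range (r+1)).filter Nat.Prime).card : ℝ) / (r:ℝ)^2 ≤ 256/((k:ℝ)+1)^2 := by
    intro k _
    rcases Nat.eq_zero_or_pos k with rfl | hk
    · have hempty : ((range N).filter Nat.Prime).filter (fun r => Nat.log 2 r = 0) = ∅ := by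
        rw [Finset.eq_empty_iff_forall_notMem]
        intro r hr
        rw [Finset.mem_filter, Finset.mem_filter] at hr
        have h2 : 2 ≤ r := hr.1.2.two_le
        have := Nat.lt_pow_succ_log_self (show 1 < 2 by norm_num) r
        rw [hr.2] at this
        norm_num at this
        omega
      rw [hempty, Finset.sum_empty]
      norm_num
    · have hterm : ∀ r ∈ ((range N).filter Nat.Prime).filter (fun r => Nat.log 2 r = k),
          (((range (r+1)).filter Nat.Prime).card : ℝ) / (r:ℝ)^2
            ≤ (16 * 2^k / k) / (4:ℝ)^k := by
        intro r hr
        rw [Finset.mem_filter, Finset.mem_filter] at hr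
        obtain ⟨⟨_, hpr⟩, hlog⟩ := hr
        have hr0 : r ≠ 0 := hpr.ne_zero
        have hlo : 2^k ≤ r := by rw [← hlog]; exact Nat.pow_log_le_self 2 hr0
        have hhi : r < 2^(k+1) := by rw [← hlog]; exact Nat.lt_pow_succ_log_self (by norm_num) r
        have hnum : (((range (r+1)).filter Nat.Prime).card : ℝ) ≤ 16 * 2^k / k := by
          refine le_trans ?_ (primesBelow_card_le k hk)
          have : ((range (r+1)).filter Nat.Prime).card
              ≤ ((range (2^(k+1))).filter Nat.Prime).card := by
            apply Finset.card_le_card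
            apply Finset.filter_subset_filter
            apply Finset.range_subset_range.2
            omega
          exact_mod_cast this
        have hden : (4:ℝ)^k ≤ (r:ℝ)^2 := by
          have : ((2:ℕ)^k : ℝ) ≤ (r:ℝ) := by exact_mod_cast hlo
          have h2 : ((2:ℝ)^k)^2 ≤ (r:ℝ)^2 := by
            apply pow_le_pow_left₀ (by positivity) _ 2
            push_cast at this ⊢
            exact this
          calc (4:ℝ)^k = ((2:ℝ)^k)^2 := by
                rw [← pow_mul, mul_comm k 2, pow_mul]; norm_num
            _ ≤ (r:ℝ)^2 := h2
        apply div_le_div₀ (by positivity) hnum (by positivity) hden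
      calc ∑ r ∈ ((range N).filter Nat.Prime).filter (fun r => Nat.log 2 r = k),
            (((range (r+1)).filter Nat.Prime).card : ℝ) / (r:ℝ)^2
          ≤ ∑ _r ∈ ((range N).filter Nat.Prime).filter (fun r => Nat.log 2 r = k),
            (16 * 2^k / k) / (4:ℝ)^k := Finset.sum_le_sum hterm
        _ = ((((range N).filter Nat.Prime).filter (fun r => Nat.log 2 r = k)).card : ℝ)
            * ((16 * 2^k / k) / (4:ℝ)^k) := by rw [Finset.sum_const, nsmul_eq_mul]
        _ ≤ (2^(k+2) / (k:ℝ)) * ((16 * 2^k / k) / (4:ℝ)^k) := by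
            apply mul_le_mul_of_nonneg_right _ (by positivity)
            have hsub : (((range N).filter Nat.Prime).filter (fun r => Nat.log 2 r = k)).card
                ≤ ((Ico (2^k) (2^(k+1))).filter Nat.Prime).card := by
              apply Finset.card_le_card
              intro r hr
              rw [Finset.mem_filter, Finset.mem_filter] at hr
              obtain ⟨⟨_, hpr⟩, hlog⟩ := hr
              rw [Finset.mem_filter, Finset.mem_Ico]
              refine ⟨⟨?_, ?_⟩, hpr⟩
              · rw [← hlog]; exact Nat.pow_log_le_self 2 hpr.ne_zero
              · rw [← hlog]; exact Nat.lt_pow_succ_log_self (by norm_num) r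
            have hdy := prime_dyadic k
            have hkR : (0:ℝ) < (k:ℝ) := by exact_mod_cast hk
            rw [le_div_iff₀ hkR]
            calc ((((range N).filter Nat.Prime).filter (fun r => Nat.log 2 r = k)).card : ℝ) * k
                ≤ (((Ico (2^k) (2^(k+1))).filter Nat.Prime).card : ℝ) * k := by
                  apply mul_le_mul_of_nonneg_right _ (le_of_lt hkR)
                  exact_mod_cast hsub
              _ ≤ 2^(k+2) := by
                  rw [mul_comm]
                  exact_mod_cast hdy
        _ ≤ 256/((k:ℝ)+1)^2 := by
            have hkR : (0:ℝ) < (k:ℝ) := by exact_mod_cast hk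
            have hk1 : (k:ℝ) + 1 ≤ 2 * k := by
              have : (1:ℝ) ≤ (k:ℝ) := by exact_mod_cast hk
              linarith
            have h4k : ((4:ℝ))^k = 2^k * 2^k := by
              rw [show (4:ℝ) = 2*2 by norm_num, mul_pow]
            have h2k : (0:ℝ) < 2^k := by positivity
            have e : (2:ℝ)^(k+2) / (k:ℝ) * ((16 * 2^k / k) / (4:ℝ)^k) = 64 / (k:ℝ)^2 := by
              rw [h4k]
              field_simp
              ring
            rw [e]
            rw [div_le_div_iff₀ (by positivity) (by positivity)]
            nlinarith [sq_nonneg ((k:ℝ) - 1)]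
  calc ∑ k ∈ range (N+1), ∑ r ∈ ((range N).filter Nat.Prime).filter (fun r => Nat.log 2 r = k),
        (((range (r+1)).filter Nat.Prime).card : ℝ) / (r:ℝ)^2
      ≤ ∑ k ∈ range (N+1), 256/((k:ℝ)+1)^2 := Finset.sum_le_sum hblock
    _ = 256 * ∑ j ∈ Icc 1 (N+1), 1/(j:ℝ)^2 := by
        rw [Finset.mul_sum, ← Finset.Ico_add_one_right_eq_Icc, Finset.sum_Ico_eq_sum_range]
        have hNN : N + 1 + 1 - 1 = N + 1 := by omega
        rw [hNN]
        apply Finset.sum_congr rfl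
        intro i _
        push_cast
        ring
    _ ≤ 256 * 2 := by
        have := sum_inv_sq_le (N+1) (by omega)
        have h1 : (0:ℝ) < ((N:ℝ)+1) := by positivity
        have h2 : (0:ℝ) ≤ 1/((N:ℝ)+1) := by positivity
        apply mul_le_mul_of_nonneg_left _ (by norm_num)
        push_cast at this
        linarith
    _ ≤ 512 := by norm_num

lemma card_range_one_filter_prime : ((range 1).filter Nat.Prime).card = 0 := by
  rw [Finset.card_eq_zero, Finset.filter_eq_empty_iff]
  intro p hp
  rw [Finset.mem_range] at hp
  interval_cases p
  exact Nat.not_prime_zero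

lemma sum_pi_maxPrimeFac_le (x : ℕ) :
    ∑ m ∈ (Icc 1 x).filter (fun m => max (maxPrimeFac m) 2 ≤ x / m),
      (((range (maxPrimeFac m + 1)).filter Nat.Prime).card : ℝ) ≤ 512 * x := by
  set A := (Icc 1 x).filter (fun m => max (maxPrimeFac m) 2 ≤ x / m) with hA
  rw [← Finset.sum_filter_add_sum_filter_not A (fun m => 2 ≤ m)]
  have hsmall : ∑ m ∈ A.filter (fun m => ¬ 2 ≤ m),
      (((range (maxPrimeFac m + 1)).filter Nat.Prime).card : ℝ) = 0 := by
    apply Finset.sum_eq_zero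
    intro m hm
    rw [Finset.mem_filter, hA, Finset.mem_filter, Finset.mem_Icc] at hm
    have hm1 : m = 1 := by omega
    subst hm1
    have : maxPrimeFac 1 = 0 := by
      rw [maxPrimeFac, Nat.primeFactors_one, Finset.sup_empty]
      rfl
    rw [this]
    rw [show (0:ℕ)+1 = 1 by rfl, card_range_one_filter_prime]
    norm_num
  rw [hsmall, add_zero]
  set A2 := A.filter (fun m => 2 ≤ m) with hA2
  have hmap : ∀ m ∈ A2, maxPrimeFac m ∈ (range (x+1)).filter Nat.Prime := by
    intro m hm
    rw [hA2, Finset.mem_filter, hA, Finset.mem_filter, Finset.mem_Icc] at hm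
    obtain ⟨⟨⟨hm1, hmx⟩, hadm⟩, hm2⟩ := hm
    rw [Finset.mem_filter, Finset.mem_range]
    constructor
    · have h1 : maxPrimeFac m ≤ x / m := le_trans (le_max_left _ _) hadm
      have h2 : x / m ≤ x := Nat.div_le_self x m
      omega
    · exact maxPrimeFac_prime hm2
  rw [← Finset.sum_fiberwise_of_maps_to hmap
    (fun m => (((range (maxPrimeFac m + 1)).filter Nat.Prime).card : ℝ))]
  have hinner : ∀ r ∈ (range (x+1)).filter Nat.Prime,
      ∑ m ∈ A2.filter (fun m => maxPrimeFac m = r),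
        (((range (maxPrimeFac m + 1)).filter Nat.Prime).card : ℝ)
      ≤ ((x:ℝ)/(r:ℝ)^2) * (((range (r+1)).filter Nat.Prime).card : ℝ) := by
    intro r hr
    rw [Finset.mem_filter, Finset.mem_range] at hr
    obtain ⟨hrx, hrp⟩ := hr
    have hrpos : 0 < r := hrp.pos
    have hconst : ∑ m ∈ A2.filter (fun m => maxPrimeFac m = r),
        (((range (maxPrimeFac m + 1)).filter Nat.Prime).card : ℝ)
        = ((A2.filter (fun m => maxPrimeFac m = r)).card : ℝ)
          * (((range (r+1)).filter Nat.Prime).card : ℝ) := by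
      calc ∑ m ∈ A2.filter (fun m => maxPrimeFac m = r),
            (((range (maxPrimeFac m + 1)).filter Nat.Prime).card : ℝ)
          = ∑ _m ∈ A2.filter (fun m => maxPrimeFac m = r),
            (((range (r + 1)).filter Nat.Prime).card : ℝ) := by
            apply Finset.sum_congr rfl
            intro m hm
            rw [(Finset.mem_filter.1 hm).2]
        _ = _ := by rw [Finset.sum_const, nsmul_eq_mul]
    have hcard : (A2.filter (fun m => maxPrimeFac m = r)).card ≤ x / r^2 := by
      have hsub : ∀ m ∈ A2.filter (fun m => maxPrimeFac m = r), m / r ∈ Icc 1 (x / r^2) := by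
        intro m hm
        rw [Finset.mem_filter, hA2, Finset.mem_filter, hA, Finset.mem_filter,
          Finset.mem_Icc] at hm
        obtain ⟨⟨⟨⟨hm1, hmx⟩, hadm⟩, hm2⟩, hPm⟩ := hm
        have hdvd : r ∣ m := by rw [← hPm]; exact maxPrimeFac_dvd hm2
        have hrm : r * m ≤ x := by
          have h1 : maxPrimeFac m ≤ x / m := le_trans (le_max_left _ _) hadm
          rw [hPm] at h1
          exact (Nat.le_div_iff_mul_le (by omega : 0 < m)).1 h1
        rw [Finset.mem_Icc]
        constructor
        · exact (Nat.one_le_div_iff hrpos).2 (Nat.le_of_dvd (by omega) hdvd)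
        · have h1 : m ≤ x / r := (Nat.le_div_iff_mul_le hrpos).2 (by rw [mul_comm]; exact hrm)
          calc m / r ≤ (x / r) / r := Nat.div_le_div_right h1
            _ = x / r^2 := by rw [Nat.div_div_eq_div_mul, pow_two]
      have hinj : Set.InjOn (fun m => m / r) (A2.filter (fun m => maxPrimeFac m = r)) := by
        intro m1 h1 m2 h2 heq
        simp only [Finset.coe_filter, Set.mem_setOf_eq] at h1 h2
        have hd1 : r ∣ m1 := by
          rw [← h1.2]
          apply maxPrimeFac_dvd
          exact (Finset.mem_filter.1 h1.1).2
        have hd2 : r ∣ m2 := by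
          rw [← h2.2]
          apply maxPrimeFac_dvd
          exact (Finset.mem_filter.1 h2.1).2
        have e1 : r * (m1 / r) = m1 := Nat.mul_div_cancel' hd1
        have e2 : r * (m2 / r) = m2 := Nat.mul_div_cancel' hd2
        simp only at heq
        rw [← e1, ← e2, heq]
      have := Finset.card_le_card_of_injOn (fun m => m / r) hsub hinj
      simpa using this
    rw [hconst]
    apply mul_le_mul_of_nonneg_right _ (by positivity)
    calc ((A2.filter (fun m => maxPrimeFac m = r)).card : ℝ) ≤ ((x / r^2 : ℕ) : ℝ) := by
          exact_mod_cast hcard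
      _ ≤ (x:ℝ)/(r:ℝ)^2 := by
          have := Nat.cast_div_le (α := ℝ) (m := x) (n := r^2)
          push_cast at this
          exact this
  calc ∑ r ∈ (range (x+1)).filter Nat.Prime, ∑ m ∈ A2.filter (fun m => maxPrimeFac m = r),
        (((range (maxPrimeFac m + 1)).filter Nat.Prime).card : ℝ)
      ≤ ∑ r ∈ (range (x+1)).filter Nat.Prime,
        ((x:ℝ)/(r:ℝ)^2) * (((range (r+1)).filter Nat.Prime).card : ℝ) :=
        Finset.sum_le_sum hinner
    _ = (x:ℝ) * ∑ r ∈ (range (x+1)).filter Nat.Prime,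
        (((range (r+1)).filter Nat.Prime).card : ℝ) / (r:ℝ)^2 := by
        rw [Finset.mul_sum]
        apply Finset.sum_congr rfl
        intro r _
        ring
    _ ≤ (x:ℝ) * 512 := by
        apply mul_le_mul_of_nonneg_left (cheby_sum (x+1)) (by positivity)
    _ = 512 * x := by ring

lemma smooth_count_le (x T : ℕ) :
    ((Icc 1 x).filter (fun m => maxPrimeFac m ≤ T)).card
      ≤ (Nat.log 2 x + 1) ^ ((range (T+1)).filter Nat.Prime).card := by
  have hcard : ((((range (T+1)).filter Nat.Prime).pi (fun _ => range (Nat.log 2 x + 1))).card)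
      = (Nat.log 2 x + 1) ^ ((range (T+1)).filter Nat.Prime).card := by
    rw [Finset.card_pi, Finset.prod_const, Finset.card_range]
  rw [← hcard]
  apply Finset.card_le_card_of_injOn (fun m => fun p _ => m.factorization p)
  · intro m hm
    simp only [Finset.mem_coe] at hm ⊢
    rw [Finset.mem_filter, Finset.mem_Icc] at hm
    obtain ⟨⟨hm1, hmx⟩, _⟩ := hm
    have hx0 : x ≠ 0 := by omega
    rw [Finset.mem_pi]
    intro p hp
    rw [Finset.mem_filter, Finset.mem_range] at hp
    rw [Finset.mem_range, Nat.lt_succ_iff]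
    rcases Nat.eq_zero_or_pos (m.factorization p) with h0 | hpos
    · rw [h0]; exact Nat.zero_le _
    · have hple : p ^ m.factorization p ≤ m := Nat.ordProj_le p (by omega)
      have h2p : 2 ≤ p := hp.2.two_le
      have h2e : 2 ^ m.factorization p ≤ x :=
        le_trans (le_trans (Nat.pow_le_pow_left h2p _) hple) hmx
      exact (Nat.le_log_iff_pow_le (by norm_num) hx0).2 h2e
  · intro m1 h1 m2 h2 heq
    simp only [Finset.coe_filter, Set.mem_setOf_eq, Finset.mem_Icc] at h1 h2
    have hm1 : m1 ≠ 0 := by omega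
    have hm2 : m2 ≠ 0 := by omega
    apply Nat.factorization_inj hm1 hm2
    ext p
    by_cases hpp : p.Prime
    · by_cases hpT : p ≤ T
      · have hp : p ∈ (range (T+1)).filter Nat.Prime := by
          rw [Finset.mem_filter, Finset.mem_range]
          exact ⟨by omega, hpp⟩
        exact congrFun (congrFun heq p) hp
      · have hd1 : ¬ p ∣ m1 := by
          intro hd
          exact hpT (le_trans (le_maxPrimeFac hpp hd hm1) h1.2)
        have hd2 : ¬ p ∣ m2 := by
          intro hd
          exact hpT (le_trans (le_maxPrimeFac hpp hd hm2) h2.2)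
        rw [Nat.factorization_eq_zero_of_not_dvd hd1, Nat.factorization_eq_zero_of_not_dvd hd2]
    · rw [Nat.factorization_eq_zero_of_not_prime _ hpp, Nat.factorization_eq_zero_of_not_prime _ hpp]

lemma tendsto_logpow (K : ℕ) (C : ℝ) :
    Tendsto (fun x : ℕ => C * ((Nat.log 2 x + 1 : ℕ) : ℝ)^K / x) atTop (nhds 0) := by
  have hlim : Tendsto (fun x : ℕ => |C| * 3^K * ((Real.log x)^K / x)) atTop (nhds 0) := by
    have h1 : Tendsto (fun y : ℝ => (Real.log y)^K / y) atTop (nhds 0) := by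
      have := (Real.isLittleO_pow_log_id_atTop (n := K)).tendsto_div_nhds_zero
      simpa using this
    have h2 := h1.comp tendsto_natCast_atTop_atTop (α := ℕ)
    have h3 := h2.const_mul (|C| * 3^K)
    simpa using h3
  apply squeeze_zero_norm' _ hlim
  have hev : ∀ᶠ x : ℕ in atTop, 3 ≤ x := eventually_atTop.2 ⟨3, fun x hx => hx⟩
  filter_upwards [hev] with x hx
  have hx0 : (0:ℝ) < (x:ℝ) := by positivity
  have hlog1 : 1 ≤ Real.log x := by
    rw [← Real.log_exp 1]
    apply Real.log_le_log (Real.exp_pos 1)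
    calc Real.exp 1 ≤ 3 := by
          have := Real.exp_one_lt_d9
          linarith
      _ ≤ (x:ℝ) := by exact_mod_cast hx
  have hlogbound : ((Nat.log 2 x + 1 : ℕ) : ℝ) ≤ 3 * Real.log x := by
    have hpow : (2:ℕ) ^ (Nat.log 2 x) ≤ x := Nat.pow_log_le_self 2 (by omega)
    have hpowR : (2:ℝ) ^ (Nat.log 2 x) ≤ (x:ℝ) := by exact_mod_cast hpow
    have hlogle : (Nat.log 2 x : ℝ) * Real.log 2 ≤ Real.log x := by
      rw [← Real.log_pow]
      exact Real.log_le_log (by positivity) hpowR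
    have hl2 : (0.6931471803 : ℝ) < Real.log 2 := Real.log_two_gt_d9
    have hn0 : (0:ℝ) ≤ (Nat.log 2 x : ℝ) := by positivity
    push_cast
    nlinarith
  have hnn : (0:ℝ) ≤ ((Nat.log 2 x + 1 : ℕ) : ℝ) := by positivity
  rw [Real.norm_eq_abs, abs_div, abs_mul]
  rw [abs_of_nonneg (pow_nonneg hnn K), abs_of_pos hx0]
  rw [div_le_iff₀ hx0]
  have hstep : ((Nat.log 2 x + 1 : ℕ) : ℝ)^K ≤ (3 * Real.log x)^K :=
    pow_le_pow_left₀ hnn hlogbound K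
  calc |C| * ((Nat.log 2 x + 1 : ℕ) : ℝ)^K ≤ |C| * (3 * Real.log x)^K :=
        mul_le_mul_of_nonneg_left hstep (abs_nonneg C)
    _ = |C| * 3^K * (Real.log x)^K := by rw [mul_pow]; ring
    _ = (|C| * 3^K * ((Real.log x)^K / (x:ℝ))) * (x:ℝ) := by field_simp

noncomputable def piSf (S : Set ℕ) (y : ℕ) : ℕ := ((Finset.range (y+1)).filter (fun p => p ∈ S)).card
noncomputable def piPf (y : ℕ) : ℕ := ((Finset.range (y+1)).filter Nat.Prime).card

lemma idS (S : Set ℕ) (hS : ∀ p ∈ S, Nat.Prime p) (x : ℕ) :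
    ∑ n ∈ Icc 2 x, (if maxPrimeFac n ∈ S then (1:ℝ) else 0)
      = ∑ m ∈ (Icc 1 x).filter (fun m => max (maxPrimeFac m) 2 ≤ x / m),
          ((piSf S (x / m) : ℝ) - (piSf S (max (maxPrimeFac m) 2 - 1) : ℝ)) := by
  rw [key_identity x (fun p => if p ∈ S then (1:ℝ) else 0)]
  apply Finset.sum_congr rfl
  intro m _
  rw [Wsum_indicator S hS, Wsum_indicator S hS, piSf, piSf]

lemma id1 (x : ℕ) (hx : 1 ≤ x) :
    ((x:ℝ) - 1)
      = ∑ m ∈ (Icc 1 x).filter (fun m => max (maxPrimeFac m) 2 ≤ x / m),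
          ((piPf (x / m) : ℝ) - (piPf (max (maxPrimeFac m) 2 - 1) : ℝ)) := by
  have h := key_identity x (fun _ => (1:ℝ))
  have hL : ∑ n ∈ Icc 2 x, (1:ℝ) = (x:ℝ) - 1 := by
    rw [Finset.sum_const, nsmul_eq_mul, mul_one, Nat.card_Icc]
    have : x + 1 - 2 = x - 1 := by omega
    rw [this]
    push_cast [hx]
    ring
  rw [hL] at h
  rw [h]
  apply Finset.sum_congr rfl
  intro m _
  rw [Wsum_one, Wsum_one, piPf, piPf]

lemma piPf_mono : Monotone piPf := by
  intro y z hyz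
  apply Finset.card_le_card
  apply Finset.filter_subset_filter
  exact Finset.range_subset_range.2 (by omega)

lemma piPf_one : piPf 1 = 0 := by
  rw [piPf, Finset.card_eq_zero, Finset.filter_eq_empty_iff]
  intro p hp
  rw [Finset.mem_range] at hp
  interval_cases p
  · exact Nat.not_prime_zero
  · exact Nat.not_prime_one

lemma piPf_le (y : ℕ) : piPf y ≤ y + 1 :=
  le_trans (Finset.card_filter_le _ _) (le_of_eq (Finset.card_range _))

lemma piSf_le (S : Set ℕ) (hS : ∀ p ∈ S, Nat.Prime p) (y : ℕ) : piSf S y ≤ piPf y := by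
  apply Finset.card_le_card
  intro p hp
  rw [Finset.mem_filter] at hp ⊢
  exact ⟨hp.1, hS p hp.2⟩

lemma core_bound (S : Set ℕ) (hS : ∀ p ∈ S, Nat.Prime p) (δ : ℝ) (ε1 : ℝ) (hε1 : 0 ≤ ε1)
    (T : ℕ) (hT2 : 2 ≤ T)
    (hTb : ∀ y, T ≤ y → |(piSf S y : ℝ) - δ * piPf y| ≤ ε1 * piPf y)
    (x : ℕ) (hx : 2 ≤ x) :
    |(∑ n ∈ Icc 2 x, (if maxPrimeFac n ∈ S then (1:ℝ) else 0)) - δ * ((x:ℝ) - 1)|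
      ≤ 1027 * ε1 * x
        + 2*(1+|δ|)*(piPf T : ℝ) * ((Nat.log 2 x + 1 : ℕ):ℝ)^(piPf T) := by
  set A := (Icc 1 x).filter (fun m => max (maxPrimeFac m) 2 ≤ x / m) with hA
  set e : ℕ → ℝ := fun y => (piSf S y : ℝ) - δ * piPf y with he
  have hE1 : ∀ y, |e y| ≤ (1+|δ|) * piPf y := by
    intro y
    have h1 : (piSf S y : ℝ) ≤ piPf y := by exact_mod_cast piSf_le S hS y
    have h2 : (0:ℝ) ≤ piPf y := by positivity
    have h0 : (0:ℝ) ≤ piSf S y := by positivity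
    calc |e y| ≤ |(piSf S y : ℝ)| + |δ * (piPf y:ℝ)| := abs_sub _ _
      _ = (piSf S y:ℝ) + |δ| * piPf y := by
          rw [abs_of_nonneg h0, abs_mul, abs_of_nonneg h2]
      _ ≤ (1+|δ|) * piPf y := by nlinarith [abs_nonneg δ]
  have hdiff : (∑ n ∈ Icc 2 x, (if maxPrimeFac n ∈ S then (1:ℝ) else 0)) - δ * ((x:ℝ) - 1)
      = ∑ m ∈ A, (e (x/m) - e (max (maxPrimeFac m) 2 - 1)) := by
    rw [idS S hS x, id1 x (by omega), Finset.mul_sum, ← Finset.sum_sub_distrib]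
    apply Finset.sum_congr rfl
    intro m _
    simp only [he]
    ring
  rw [hdiff]
  have hPm : ∑ m ∈ A, (piPf (maxPrimeFac m) : ℝ) ≤ 512 * x := by
    have h := sum_pi_maxPrimeFac_le x
    rw [hA]
    convert h using 2 with m
    rfl
  have hcardA : (A.card : ℝ) ≤ x := by
    have h1 : A.card ≤ (Icc 1 x).card := Finset.card_le_card (Finset.filter_subset _ _)
    rw [Nat.card_Icc] at h1
    have hh : A.card ≤ x := by omega
    exact_mod_cast hh
  have haux : ∀ m ∈ A, (piPf (max (maxPrimeFac m) 2 - 1) : ℝ) ≤ (piPf (maxPrimeFac m) : ℝ) + 1 := by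
    intro m _
    rcases le_or_gt (maxPrimeFac m) 2 with h | h
    · have hmax : max (maxPrimeFac m) 2 = 2 := max_eq_right h
      rw [hmax]
      have : piPf (2-1) = 0 := piPf_one
      rw [show (2:ℕ)-1 = 1 from rfl, piPf_one]
      have : (0:ℝ) ≤ piPf (maxPrimeFac m) := by positivity
      push_cast
      linarith
    · have hmax : max (maxPrimeFac m) 2 = maxPrimeFac m := max_eq_left (by omega)
      rw [hmax]
      have hc : (piPf (maxPrimeFac m - 1) : ℝ) ≤ piPf (maxPrimeFac m) := by
        exact_mod_cast piPf_mono (show maxPrimeFac m - 1 ≤ maxPrimeFac m by omega)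
      linarith
  have hsum_a : ∑ m ∈ A, (piPf (max (maxPrimeFac m) 2 - 1) : ℝ) ≤ 513 * x := by
    calc ∑ m ∈ A, (piPf (max (maxPrimeFac m) 2 - 1) : ℝ)
        ≤ ∑ m ∈ A, ((piPf (maxPrimeFac m) : ℝ) + 1) := Finset.sum_le_sum haux
      _ = (∑ m ∈ A, (piPf (maxPrimeFac m) : ℝ)) + A.card := by
          rw [Finset.sum_add_distrib, Finset.sum_const, nsmul_eq_mul, mul_one]
      _ ≤ 512 * x + x := by linarith
      _ = 513 * x := by ring
  have hsum_b : ∑ m ∈ A, (piPf (x / m) : ℝ) ≤ 514 * x := by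
    have hid := id1 x (by omega)
    rw [← hA] at hid
    rw [Finset.sum_sub_distrib] at hid
    have heq : ∑ m ∈ A, (piPf (x / m) : ℝ)
        = ((x:ℝ) - 1) + ∑ m ∈ A, (piPf (max (maxPrimeFac m) 2 - 1) : ℝ) := by linarith
    rw [heq]
    have hx1 : (1:ℝ) ≤ (x:ℝ) := by exact_mod_cast (show 1 ≤ x by omega)
    linarith
  have hterm : ∀ m ∈ A,
      |e (x/m) - e (max (maxPrimeFac m) 2 - 1)|
        ≤ ε1 * ((piPf (x/m) : ℝ) + (piPf (max (maxPrimeFac m) 2 - 1) : ℝ))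
          + (if maxPrimeFac m ≤ T then 2*(1+|δ|)*(piPf T : ℝ) else 0) := by
    intro m hm
    rw [hA, Finset.mem_filter, Finset.mem_Icc] at hm
    obtain ⟨⟨hm1, hmx⟩, hadm⟩ := hm
    have hitenn : (0:ℝ) ≤ (if maxPrimeFac m ≤ T then (1+|δ|)*(piPf T : ℝ) else 0) := by
      split
      · positivity
      · exact le_rfl
    have hTb' : ∀ y, T ≤ y → |e y| ≤ ε1 * piPf y := hTb
    have hb1 : |e (x/m)| ≤ ε1 * (piPf (x/m) : ℝ)
        + (if maxPrimeFac m ≤ T then (1+|δ|)*(piPf T : ℝ) else 0) := by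
      rcases le_or_gt T (x/m) with hc | hc
      · have h := hTb' (x/m) hc
        linarith [hitenn]
      · have hPmT : maxPrimeFac m ≤ T := by
          have h1 : maxPrimeFac m ≤ x/m := le_trans (le_max_left _ _) hadm
          omega
        rw [if_pos hPmT]
        have h1 := hE1 (x/m)
        have h2 : (piPf (x/m) : ℝ) ≤ piPf T := by
          exact_mod_cast piPf_mono (show x/m ≤ T by omega)
        have h3 : (0:ℝ) ≤ piPf (x/m) := by positivity
        have h4 : (0:ℝ) ≤ 1+|δ| := by positivity
        nlinarith [mul_nonneg hε1 h3]
    have hb2 : |e (max (maxPrimeFac m) 2 - 1)| ≤ ε1 * (piPf (max (maxPrimeFac m) 2 - 1) : ℝ)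
        + (if maxPrimeFac m ≤ T then (1+|δ|)*(piPf T : ℝ) else 0) := by
      rcases le_or_gt T (max (maxPrimeFac m) 2 - 1) with hc | hc
      · have h := hTb' _ hc
        linarith [hitenn]
      · have hPmT : maxPrimeFac m ≤ T := by
          have h2 : 2 ≤ max (maxPrimeFac m) 2 := le_max_right _ _
          have h3 : max (maxPrimeFac m) 2 ≤ T := by omega
          exact le_trans (le_max_left _ _) h3
        rw [if_pos hPmT]
        have h1 := hE1 (max (maxPrimeFac m) 2 - 1)
        have h2 : (piPf (max (maxPrimeFac m) 2 - 1) : ℝ) ≤ piPf T := by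
          exact_mod_cast piPf_mono (show max (maxPrimeFac m) 2 - 1 ≤ T by omega)
        have h3 : (0:ℝ) ≤ piPf (max (maxPrimeFac m) 2 - 1) := by positivity
        have h4 : (0:ℝ) ≤ 1+|δ| := by positivity
        nlinarith [mul_nonneg hε1 h3]
    have htri : |e (x/m) - e (max (maxPrimeFac m) 2 - 1)|
        ≤ |e (x/m)| + |e (max (maxPrimeFac m) 2 - 1)| := abs_sub _ _
    have hite2 : (if maxPrimeFac m ≤ T then (1+|δ|)*(piPf T : ℝ) else 0)
        + (if maxPrimeFac m ≤ T then (1+|δ|)*(piPf T : ℝ) else 0)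
        = (if maxPrimeFac m ≤ T then 2*(1+|δ|)*(piPf T : ℝ) else 0) := by
      split <;> ring
    linarith
  have hsmooth : ((A.filter (fun m => maxPrimeFac m ≤ T)).card : ℝ)
      ≤ ((Nat.log 2 x + 1 : ℕ):ℝ)^(piPf T) := by
    have h1 : (A.filter (fun m => maxPrimeFac m ≤ T)).card
        ≤ ((Icc 1 x).filter (fun m => maxPrimeFac m ≤ T)).card := by
      apply Finset.card_le_card
      intro a ha
      rw [Finset.mem_filter] at ha ⊢
      have ha1 := ha.1
      rw [hA, Finset.mem_filter] at ha1
      exact ⟨ha1.1, ha.2⟩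
    have h2 := smooth_count_le x T
    have h3 : (A.filter (fun m => maxPrimeFac m ≤ T)).card ≤ (Nat.log 2 x + 1) ^ (piPf T) :=
      le_trans h1 h2
    calc ((A.filter (fun m => maxPrimeFac m ≤ T)).card : ℝ)
        ≤ (((Nat.log 2 x + 1) ^ (piPf T) : ℕ) : ℝ) := by exact_mod_cast h3
      _ = ((Nat.log 2 x + 1 : ℕ):ℝ)^(piPf T) := by push_cast; ring
  calc |∑ m ∈ A, (e (x/m) - e (max (maxPrimeFac m) 2 - 1))|
      ≤ ∑ m ∈ A, |e (x/m) - e (max (maxPrimeFac m) 2 - 1)| := Finset.abs_sum_le_sum_abs _ _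
    _ ≤ ∑ m ∈ A, (ε1 * ((piPf (x/m) : ℝ) + (piPf (max (maxPrimeFac m) 2 - 1) : ℝ))
          + (if maxPrimeFac m ≤ T then 2*(1+|δ|)*(piPf T : ℝ) else 0)) := Finset.sum_le_sum hterm
    _ = ε1 * ((∑ m ∈ A, (piPf (x/m) : ℝ)) + ∑ m ∈ A, (piPf (max (maxPrimeFac m) 2 - 1) : ℝ))
          + ∑ m ∈ A, (if maxPrimeFac m ≤ T then 2*(1+|δ|)*(piPf T : ℝ) else 0) := by
        rw [Finset.sum_add_distrib, ← Finset.mul_sum, Finset.sum_add_distrib]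
    _ ≤ ε1 * (514*x + 513*x)
          + 2*(1+|δ|)*(piPf T : ℝ) * ((Nat.log 2 x + 1 : ℕ):ℝ)^(piPf T) := by
        have hsum_ite : ∑ m ∈ A, (if maxPrimeFac m ≤ T then 2*(1+|δ|)*(piPf T : ℝ) else 0)
            = 2*(1+|δ|)*(piPf T : ℝ) * ((A.filter (fun m => maxPrimeFac m ≤ T)).card : ℝ) := by
          rw [← Finset.sum_filter, Finset.sum_const, nsmul_eq_mul, mul_comm]
        rw [hsum_ite]
        have hK : (0:ℝ) ≤ 2*(1+|δ|)*(piPf T : ℝ) := by positivity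
        have h5 := mul_le_mul_of_nonneg_left hsmooth hK
        have h6 : ε1 * ((∑ m ∈ A, (piPf (x/m) : ℝ)) + ∑ m ∈ A, (piPf (max (maxPrimeFac m) 2 - 1) : ℝ))
            ≤ ε1 * (514*x + 513*x) := by
          apply mul_le_mul_of_nonneg_left _ hε1
          linarith
        linarith
    _ = 1027 * ε1 * x
          + 2*(1+|δ|)*(piPf T : ℝ) * ((Nat.log 2 x + 1 : ℕ):ℝ)^(piPf T) := by ring

/-- Equidistribution of largest prime factors over ℕ: if `S` is a set of primes of natural
density `δ(S)`, then `∑_{2 ≤ n ≤ x} Q_S(n) ~ δ(S)·x`, where `Q_S(n) = 1` iff `P⁺(n) ∈ S`. -/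
theorem largest_prime_factor_equidistribution (S : Set ℕ) (hS : ∀ p ∈ S, Nat.Prime p)
    (δ : ℝ)
    (hdens : Tendsto
      (fun x : ℕ => (((Finset.range (x + 1)).filter (fun p => p ∈ S)).card : ℝ) /
        (Nat.primeCounting x : ℝ)) atTop (nhds δ)) :
    Tendsto
      (fun x : ℕ =>
        (∑ n ∈ Finset.Icc 2 x, (if maxPrimeFac n ∈ S then (1 : ℝ) else 0)) / x)
      atTop (nhds δ) := by
  have hpc : ∀ y : ℕ, Nat.primeCounting y = piPf y := by
    intro y
    rw [Nat.primeCounting, Nat.primeCounting', Nat.count_eq_card_filter_range, piPf]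
  have hdens' : Tendsto (fun y : ℕ => (piSf S y : ℝ) / piPf y) atTop (nhds δ) := by
    have heq : (fun y : ℕ => (piSf S y : ℝ) / piPf y)
        = fun x : ℕ => (((Finset.range (x + 1)).filter (fun p => p ∈ S)).card : ℝ) /
          (Nat.primeCounting x : ℝ) := by
      funext y
      rw [hpc y, piSf]
    rw [heq]
    exact hdens
  have hE2 : ∀ ε : ℝ, 0 < ε →
      ∀ᶠ y : ℕ in atTop, |(piSf S y : ℝ) - δ * piPf y| ≤ ε * piPf y := by
    intro ε hε
    have h1 : ∀ᶠ y : ℕ in atTop, |(piSf S y:ℝ)/piPf y - δ| < ε := by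
      have := Metric.tendsto_nhds.1 hdens' ε hε
      simpa [Real.dist_eq] using this
    have h2 : ∀ᶠ y : ℕ in atTop, 1 ≤ piPf y := by
      rw [eventually_atTop]
      refine ⟨2, fun y hy => ?_⟩
      have hmem : (2:ℕ) ∈ (range (y+1)).filter Nat.Prime := by
        rw [Finset.mem_filter, Finset.mem_range]
        exact ⟨by omega, Nat.prime_two⟩
      exact Finset.card_pos.2 ⟨2, hmem⟩
    filter_upwards [h1, h2] with y hy1 hy2
    have hpos : (0:ℝ) < piPf y := by exact_mod_cast hy2
    have heq : (piSf S y : ℝ) - δ * piPf y = ((piSf S y:ℝ)/piPf y - δ) * piPf y := by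
      field_simp
    rw [heq, abs_mul, abs_of_pos hpos]
    exact mul_le_mul_of_nonneg_right (le_of_lt hy1) (le_of_lt hpos)
  rw [Metric.tendsto_nhds]
  intro ε hε
  have hε1pos : 0 < ε / 4400 := by positivity
  obtain ⟨T₀, hT₀⟩ := eventually_atTop.1 (hE2 (ε/4400) hε1pos)
  set T := max T₀ 2 with hT
  have hT2 : 2 ≤ T := le_max_right _ _
  have hTb : ∀ y, T ≤ y → |(piSf S y : ℝ) - δ * piPf y| ≤ (ε/4400) * piPf y :=
    fun y hy => hT₀ y (le_trans (le_max_left _ _) hy)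
  have hlog := tendsto_logpow (piPf T) (2*(1+|δ|)*(piPf T : ℝ))
  have hlog' : ∀ᶠ x : ℕ in atTop,
      2*(1+|δ|)*(piPf T : ℝ) * ((Nat.log 2 x + 1 : ℕ):ℝ)^(piPf T) / x < ε/4 := by
    have h := Metric.tendsto_nhds.1 hlog (ε/4) (by positivity)
    filter_upwards [h] with x hx
    rw [Real.dist_eq, sub_zero] at hx
    exact lt_of_abs_lt hx
  have hδx : ∀ᶠ x : ℕ in atTop, |δ| / x < ε / 4 := by
    have h := Metric.tendsto_nhds.1 (tendsto_const_div_atTop_nhds_zero_nat |δ|) (ε/4)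
      (by positivity)
    filter_upwards [h] with x hx
    rw [Real.dist_eq, sub_zero] at hx
    exact lt_of_abs_lt hx
  filter_upwards [hlog', hδx, eventually_ge_atTop 2] with x hx1 hx2 hx3
  have hxR : (0:ℝ) < x := by
    have : 0 < x := by omega
    exact_mod_cast this
  have hcore := core_bound S hS δ (ε/4400) (le_of_lt hε1pos) T hT2 hTb x hx3
  rw [Real.dist_eq]
  set Sx := ∑ n ∈ Finset.Icc 2 x, (if maxPrimeFac n ∈ S then (1 : ℝ) else 0) with hSx
  have habs : |Sx / x - δ| ≤ |Sx - δ*((x:ℝ)-1)|/x + |δ|/x := by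
    have hsplit : Sx / x - δ = (Sx - δ*((x:ℝ)-1))/x + (-δ)/x := by
      field_simp
      ring
    rw [hsplit]
    refine le_trans (abs_add_le _ _) ?_
    rw [abs_div, abs_div, abs_of_pos hxR, abs_neg]
  have hfin : |Sx - δ*((x:ℝ)-1)|/x
      ≤ 1027*(ε/4400)
        + (2*(1+|δ|)*(piPf T : ℝ) * ((Nat.log 2 x + 1 : ℕ):ℝ)^(piPf T))/x := by
    calc |Sx - δ*((x:ℝ)-1)|/x
        ≤ (1027 * (ε/4400) * x
            + 2*(1+|δ|)*(piPf T : ℝ) * ((Nat.log 2 x + 1 : ℕ):ℝ)^(piPf T))/x := by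
          gcongr
      _ = 1027*(ε/4400)
            + (2*(1+|δ|)*(piPf T : ℝ) * ((Nat.log 2 x + 1 : ℕ):ℝ)^(piPf T))/x := by
          field_simp
  have hL : (2*(1+|δ|)*(piPf T : ℝ) * ((Nat.log 2 x + 1 : ℕ):ℝ)^(piPf T))/x < ε/4 := hx1
  have hq : 1027*(ε/4400) ≤ ε/4 := by linarith
  linarith
end
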